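/- arXiv:2103.07071 — 8 statements merged into one kernel-verified Lean document; each statement's English description precedes it below -/
import Mathlib

section
/- Let X be a real Banach space and let μ be a convex measure of noncompactness on X. Then μ is translation invariant by compact convex sets: μ(B + C) = μ(B) for every nonempty bounded subset B of X and every nonempty compact convex subset C of X, where B + C = {b + c : b ∈ B, c ∈ C}. -/
/-! For convex `B` and nonempty compact `K`, the convexity axiom applied to `2 • B` and `2 • K`
(the latter of measure `0`) gives `μ (B + K) ≤ μ (2 • B) / 2`, uniformly in `K`. Writing
`B + K = (1 - t) • B + t • (B + t⁻¹ • K)` therefore gives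
`μ (B + K) ≤ (1 - t) μ B + t μ (2 • B) / 2`, and `t → 0` yields `μ (B + K) ≤ μ B`. Applied to the convex set `B + {c}` and `K = {-c}` with
`c ∈ C`, this gives the reverse inequality `μ B ≤ μ (B + {c}) ≤ μ (B + C)`. Since `μ` does not see
convex hulls and `convexHull (B + C) = convexHull B + C`, it suffices to treat convex `B`. -/

open Set Bornology Pointwise

/-- A convex measure of noncompactness (convex MNC) on a real Banach space `X`. -/
structure IsConvexMNC (X : Type*) [NormedAddCommGroup X] [NormedSpace ℝ X]
    (μ : Set X → ℝ) : Prop where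
  nonneg : ∀ B : Set X, B.Nonempty → IsBounded B → 0 ≤ μ B
  eq_zero_iff : ∀ B : Set X, B.Nonempty → IsBounded B →
    (μ B = 0 ↔ IsCompact (closure B))
  mono : ∀ A B : Set X, B.Nonempty → IsBounded A → B ⊆ A → μ B ≤ μ A
  convexHull_inv : ∀ B : Set X, B.Nonempty → IsBounded B → μ (convexHull ℝ B) = μ B
  convex : ∀ A B : Set X, A.Nonempty → B.Nonempty → IsBounded A → IsBounded B →
    ∀ l : ℝ, 0 ≤ l → l ≤ 1 → μ (l • A + (1 - l) • B) ≤ l * μ A + (1 - l) * μ B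

open Filter Topology

lemma le_of_forall_le_one_sub_mul_add_mul {x y M : ℝ}
    (h : ∀ t ∈ Ioo (0 : ℝ) 1, x ≤ (1 - t) * y + t * M) : x ≤ y := by
  have hlim : Tendsto (fun t : ℝ => (1 - t) * y + t * M) (𝓝[>] 0) (𝓝 y) := by
    have hcont : Continuous fun t : ℝ => (1 - t) * y + t * M := by fun_prop
    simpa using (hcont.tendsto 0).mono_left nhdsWithin_le_nhds
  exact ge_of_tendsto hlim (eventually_of_mem (Ioo_mem_nhdsGT one_pos) h)

namespace IsConvexMNC

variable {X : Type*} [NormedAddCommGroup X] [NormedSpace ℝ X] {μ : Set X → ℝ}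

lemma eq_zero_of_isCompact (hμ : IsConvexMNC X μ) {K : Set X} (hKne : K.Nonempty)
    (hK : IsCompact K) : μ K = 0 :=
  (hμ.eq_zero_iff K hKne hK.isBounded).2 hK.closure

lemma add_le_half_two_smul (hμ : IsConvexMNC X μ) {B K : Set X} (hBne : B.Nonempty)
    (hBbdd : IsBounded B) (hKne : K.Nonempty) (hK : IsCompact K) :
    μ (B + K) ≤ μ ((2 : ℝ) • B) / 2 := by
  have h := hμ.convex ((2 : ℝ) • B) ((2 : ℝ) • K) hBne.smul_set hKne.smul_set
    (hBbdd.smul₀ 2) (hK.smul 2).isBounded (1 / 2) (by norm_num) (by norm_num)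
  have hsum : (1 / 2 : ℝ) • (2 : ℝ) • B + (1 - 1 / 2 : ℝ) • (2 : ℝ) • K = B + K := by
    simp only [smul_smul]
    norm_num
  rw [hsum, hμ.eq_zero_of_isCompact hKne.smul_set (hK.smul 2)] at h
  linarith

lemma add_le_of_convex (hμ : IsConvexMNC X μ) {B K : Set X} (hBne : B.Nonempty)
    (hBbdd : IsBounded B) (hBcvx : Convex ℝ B) (hKne : K.Nonempty) (hK : IsCompact K) :
    μ (B + K) ≤ μ B := by
  refine le_of_forall_le_one_sub_mul_add_mul (M := μ ((2 : ℝ) • B) / 2) fun t ⟨ht0, ht1⟩ => ?_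
  have hKt : IsCompact (t⁻¹ • K) := hK.smul t⁻¹
  have hsplit : (1 - t) • B + t • (B + t⁻¹ • K) = B + K := by
    rw [smul_add, ← add_assoc, ← hBcvx.add_smul (by linarith) ht0.le, sub_add_cancel, one_smul,
      smul_smul, mul_inv_cancel₀ ht0.ne', one_smul]
  have h := hμ.convex B (B + t⁻¹ • K) hBne (hBne.add hKne.smul_set) hBbdd
    (hBbdd.add hKt.isBounded) (1 - t) (by linarith) (by linarith)
  rw [sub_sub_cancel, hsplit] at h
  calc μ (B + K) ≤ (1 - t) * μ B + t * μ (B + t⁻¹ • K) := h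
    _ ≤ (1 - t) * μ B + t * (μ ((2 : ℝ) • B) / 2) := by
      gcongr
      exact hμ.add_le_half_two_smul hBne hBbdd hKne.smul_set hKt

lemma le_add_of_convex (hμ : IsConvexMNC X μ) {B C : Set X} (hBne : B.Nonempty)
    (hBbdd : IsBounded B) (hBcvx : Convex ℝ B) (hCne : C.Nonempty) (hCbdd : IsBounded C) :
    μ B ≤ μ (B + C) := by
  obtain ⟨c, hc⟩ := hCne
  have hBc : B + {c} + {-c} = B := by
    rw [add_assoc, singleton_add_singleton, add_neg_cancel, singleton_zero, add_zero]
  calc μ B = μ (B + {c} + {-c}) := by rw [hBc]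
    _ ≤ μ (B + {c}) :=
      hμ.add_le_of_convex (hBne.add (singleton_nonempty c))
        (hBbdd.add isBounded_singleton) (hBcvx.add (convex_singleton c))
        (singleton_nonempty _) isCompact_singleton
    _ ≤ μ (B + C) :=
      hμ.mono _ _ (hBne.add (singleton_nonempty c)) (hBbdd.add hCbdd)
        (add_subset_add_left (singleton_subset_iff.2 hc))

lemma add_eq_of_convex (hμ : IsConvexMNC X μ) {B K : Set X} (hBne : B.Nonempty)
    (hBbdd : IsBounded B) (hBcvx : Convex ℝ B) (hKne : K.Nonempty) (hK : IsCompact K) :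
    μ (B + K) = μ B :=
  (hμ.add_le_of_convex hBne hBbdd hBcvx hKne hK).antisymm
    (hμ.le_add_of_convex hBne hBbdd hBcvx hKne hK.isBounded)

end IsConvexMNC

theorem convexMNC_add_compact_convex_eq_general {X : Type*} [NormedAddCommGroup X]
    [NormedSpace ℝ X] (μ : Set X → ℝ) (hμ : IsConvexMNC X μ)
    (B : Set X) (hBne : B.Nonempty) (hBbdd : IsBounded B)
    (C : Set X) (hCne : C.Nonempty) (hCcpt : IsCompact C) (hCcvx : Convex ℝ C) :
    μ (B + C) = μ B := by
  have hull : convexHull ℝ (B + C) = convexHull ℝ B + C := by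
    rw [convexHull_add, hCcvx.convexHull_eq]
  rw [← hμ.convexHull_inv _ (hBne.add hCne) (hBbdd.add hCcpt.isBounded), hull,
    ← hμ.convexHull_inv B hBne hBbdd]
  exact hμ.add_eq_of_convex hBne.convexHull (isBounded_convexHull.2 hBbdd)
    (convex_convexHull ℝ B) hCne hCcpt

/-- Translation invariance by compact convex sets: `μ (B + C) = μ B` for every nonempty
bounded `B` and every nonempty compact convex `C`, where `B + C` is the Minkowski sum. -/
theorem convexMNC_add_compact_convex_eq {X : Type*} [NormedAddCommGroup X]
    [NormedSpace ℝ X] [CompleteSpace X] (μ : Set X → ℝ) (hμ : IsConvexMNC X μ)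
    (B : Set X) (hBne : B.Nonempty) (hBbdd : IsBounded B)
    (C : Set X) (hCne : C.Nonempty) (hCcpt : IsCompact C) (hCcvx : Convex ℝ C) :
    μ (B + C) = μ B :=
  convexMNC_add_compact_convex_eq_general μ hμ B hBne hBbdd C hCne hCcpt hCcvx
end

section
/- (Mean-value theorem for convex functions.) Let X be a real Banach space, let D ⊆ X be a closed convex set with nonempty interior, and let g : D → ℝ be a continuous convex function. Then for all x, y in the interior of D there exist a point ξ in the segment [x,y] and a subgradient x*_ξ ∈ ∂g(ξ) such that g(y) − g(x) = x*_ξ(y − x). -/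
/-!
With `v = y - x` and `c = g y - g x`, the convex function `t ↦ g (x + t • v) - c * t` takes the
same value at `0` and `1`, so it attains its minimum on `[0, 1]` at some `t₀ ∈ (0, 1)`. At
`ξ = x + t₀ • v` the one-sided directional derivative `g'(ξ; ·)` therefore satisfies
`g'(ξ; v) ≥ c` and `g'(ξ; -v) ≥ -c`, i.e. `s • v ↦ s * c` is dominated by the sublinear functional
`g'(ξ; ·)`. A Hahn–Banach extension `φ ≤ g'(ξ; ·)` is a subgradient of `g` at `ξ`, and it is
continuous because `g` is bounded above near `ξ`.
-/

open Set

/-- The subdifferential (relative to the set `D`) of a function `g : X → ℝ` at `ξ`: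
the set of continuous linear functionals `φ` with `g z - g ξ ≥ φ (z - ξ)` for all `z ∈ D`. -/
def SubdifferentialWithin {X : Type*} [NormedAddCommGroup X] [NormedSpace ℝ X]
    (g : X → ℝ) (D : Set X) (ξ : X) : Set (X →L[ℝ] ℝ) :=
  {φ | ∀ z ∈ D, φ (z - ξ) ≤ g z - g ξ}

open Filter Topology

lemma ConvexOn.exists_isMinOn_Ioo {f : ℝ → ℝ} {a b : ℝ} (hab : a < b)
    (hf : ConvexOn ℝ (Icc a b) f) (hfc : ContinuousOn f (Icc a b)) (hfab : f a = f b) :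
    ∃ c ∈ Ioo a b, IsMinOn f (Icc a b) c := by
  obtain ⟨t, ht, hmin⟩ := isCompact_Icc.exists_isMinOn (nonempty_Icc.2 hab.le) hfc
  by_cases hti : t ∈ Ioo a b
  · exact ⟨t, hti, hmin⟩
  have hft : f t = f a := by
    have : t ∈ ({a, b} : Set ℝ) := by rw [← Icc_sdiff_Ioo_same hab.le]; exact ⟨ht, hti⟩
    rcases this with rfl | rfl
    exacts [rfl, hfab.symm]
  have hmid : (a + b) / 2 ∈ Ioo a b := ⟨by linarith, by linarith⟩
  have hmid_le : f ((a + b) / 2) ≤ f a := by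
    simpa [← hfab] using hf.le_max_of_mem_segment (left_mem_Icc.2 hab.le)
      (right_mem_Icc.2 hab.le) (segment_eq_Icc hab.le ▸ Ioo_subset_Icc_self hmid)
  refine ⟨(a + b) / 2, hmid, fun z hz => ?_⟩
  exact hmid_le.trans (hft ▸ hmin hz)

/-- The one-sided directional derivative `g'(ξ; u)`. -/
noncomputable def rightLineDeriv {X : Type*} [NormedAddCommGroup X] [NormedSpace ℝ X]
    (g : X → ℝ) (ξ u : X) : ℝ :=
  derivWithin (fun t : ℝ => g (ξ + t • u)) (Ioi 0) 0

section

variable {X : Type*} [NormedAddCommGroup X] [NormedSpace ℝ X] {D : Set X} {g : X → ℝ} {ξ u v : X}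

lemma rightLineDeriv_zero (g : X → ℝ) (ξ : X) : rightLineDeriv g ξ 0 = 0 := by
  simp [rightLineDeriv]

lemma ConvexOn.comp_line (hg : ConvexOn ℝ D g) (ξ u : X) :
    ConvexOn ℝ ((fun t : ℝ => ξ + t • u) ⁻¹' D) (fun t => g (ξ + t • u)) := by
  have hline : ⇑(AffineMap.lineMap ξ (ξ + u)) = fun t : ℝ => ξ + t • u := by
    funext t; simp [AffineMap.lineMap_apply_module', add_comm]
  have := hg.comp_affineMap (AffineMap.lineMap ξ (ξ + u))
  rwa [hline] at this

lemma zero_mem_interior_preimage_line (hξ : ξ ∈ interior D) (u : X) :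
    (0 : ℝ) ∈ interior ((fun t : ℝ => ξ + t • u) ⁻¹' D) :=
  preimage_interior_subset_interior_preimage (by fun_prop) (by simpa using hξ)

lemma ConvexOn.hasDerivWithinAt_rightLineDeriv (hg : ConvexOn ℝ D g) (hξ : ξ ∈ interior D)
    (u : X) : HasDerivWithinAt (fun t : ℝ => g (ξ + t • u)) (rightLineDeriv g ξ u) (Ioi 0) 0 :=
  (hg.comp_line ξ u).hasDerivWithinAt_rightDeriv_of_mem_interior
    (zero_mem_interior_preimage_line hξ u)

lemma ConvexOn.tendsto_slope_rightLineDeriv (hg : ConvexOn ℝ D g) (hξ : ξ ∈ interior D) (u : X) :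
    Tendsto (fun t : ℝ => (g (ξ + t • u) - g ξ) / t) (𝓝[>] 0) (𝓝 (rightLineDeriv g ξ u)) := by
  simpa [slope_fun_def_field] using (hasDerivWithinAt_iff_tendsto_slope' self_notMem_Ioi).1
    (hg.hasDerivWithinAt_rightLineDeriv hξ u)

lemma ConvexOn.rightLineDeriv_le_slope (hg : ConvexOn ℝ D g) (hξ : ξ ∈ interior D) {t : ℝ}
    (ht : 0 < t) (htD : ξ + t • u ∈ D) : rightLineDeriv g ξ u ≤ (g (ξ + t • u) - g ξ) / t := by
  simpa [rightLineDeriv, slope_def_field] using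
    (hg.comp_line ξ u).rightDeriv_le_slope_of_mem_interior (zero_mem_interior_preimage_line hξ u)
      htD ht

lemma ConvexOn.rightLineDeriv_smul (hg : ConvexOn ℝ D g) (hξ : ξ ∈ interior D) {c : ℝ}
    (hc : 0 < c) (u : X) : rightLineDeriv g ξ (c • u) = c * rightLineDeriv g ξ u := by
  have hscale : HasDerivWithinAt (fun t : ℝ => t * c) c (Ioi 0) 0 := by
    simpa using (hasDerivWithinAt_id (0 : ℝ) (Ioi 0)).mul_const c
  have := HasDerivWithinAt.comp_of_eq 0 (hg.hasDerivWithinAt_rightLineDeriv hξ u) hscale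
    (fun t (ht : 0 < t) => mul_pos ht hc) (zero_mul c).symm
  rw [mul_comm]
  refine HasDerivWithinAt.derivWithin ?_ (uniqueDiffWithinAt_Ioi 0)
  simpa [Function.comp_def, mul_smul] using this

lemma ConvexOn.rightLineDeriv_add_le (hg : ConvexOn ℝ D g) (hξ : ξ ∈ interior D) (u v : X) :
    rightLineDeriv g ξ (u + v) ≤ rightLineDeriv g ξ u + rightLineDeriv g ξ v := by
  have hmem : ∀ w : X, ∀ᶠ t in 𝓝[>] (0 : ℝ), ξ + t • w ∈ D := fun w =>
    nhdsWithin_le_nhds (mem_interior_iff_mem_nhds.1 (zero_mem_interior_preimage_line hξ w))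
  have hmid : ∀ᶠ t in 𝓝[>] (0 : ℝ), (g (ξ + t • (u + v)) - g ξ) / t ≤
      1 / 2 * ((g (ξ + t • ((2 : ℝ) • u)) - g ξ) / t) +
        1 / 2 * ((g (ξ + t • ((2 : ℝ) • v)) - g ξ) / t) := by
    filter_upwards [hmem ((2 : ℝ) • u), hmem ((2 : ℝ) • v), self_mem_nhdsWithin]
      with t hu hv (ht : 0 < t)
    have hconv := hg.2 hu hv (by norm_num : (0 : ℝ) ≤ 1 / 2) (by norm_num : (0 : ℝ) ≤ 1 / 2)
      (by norm_num)
    have hpt : (1 / 2 : ℝ) • (ξ + t • ((2 : ℝ) • u)) + (1 / 2 : ℝ) • (ξ + t • ((2 : ℝ) • v)) =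
        ξ + t • (u + v) := by module
    rw [hpt, smul_eq_mul, smul_eq_mul] at hconv
    rw [div_le_iff₀ ht]
    field_simp
    linarith
  have := le_of_tendsto_of_tendsto (hg.tendsto_slope_rightLineDeriv hξ (u + v))
    (((hg.tendsto_slope_rightLineDeriv hξ ((2 : ℝ) • u)).const_mul (1 / 2)).add
      ((hg.tendsto_slope_rightLineDeriv hξ ((2 : ℝ) • v)).const_mul (1 / 2))) hmid
  rw [hg.rightLineDeriv_smul hξ two_pos, hg.rightLineDeriv_smul hξ two_pos] at this
  linarith

lemma LinearMap.continuous_of_le_sub_of_continuousAt {φ : X →ₗ[ℝ] ℝ} (hD : D ∈ 𝓝 ξ)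
    (hg : ContinuousAt g ξ) (hφ : ∀ z ∈ D, φ (z - ξ) ≤ g z - g ξ) : Continuous φ := by
  have hnear : ∀ᶠ w in 𝓝 (0 : X), ξ + w ∈ D ∧ g (ξ + w) < g ξ + 1 := by
    have hlim : Tendsto (fun w : X => ξ + w) (𝓝 0) (𝓝 ξ) := by
      simpa using (continuous_const_add ξ).tendsto (0 : X)
    exact hlim.eventually (Filter.inter_mem hD (hg.eventually (gt_mem_nhds (lt_add_one (g ξ)))))
  have hbdd : (𝓝 (0 : X)).IsBoundedUnder (· ≤ ·) φ := by
    refine isBoundedUnder_of_eventually_le (a := 1) (hnear.mono fun w ⟨hwD, hwg⟩ => ?_)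
    have := hφ _ hwD
    rw [add_sub_cancel_left] at this
    linarith
  rw [← continuousOn_univ]
  have hbdd_iff_cont :=
    ((φ.convexOn convex_univ).continuousOn_tfae isOpen_univ univ_nonempty).out 3 1
  exact hbdd_iff_cont.1 ⟨0, mem_univ _, hbdd⟩

lemma ConvexOn.mul_le_rightLineDeriv_smul (hg : ConvexOn ℝ D g) (hξ : ξ ∈ interior D) {c : ℝ}
    (hpos : c ≤ rightLineDeriv g ξ v) (hneg : -c ≤ rightLineDeriv g ξ (-v)) (s : ℝ) :
    s * c ≤ rightLineDeriv g ξ (s • v) := by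
  rcases lt_trichotomy s 0 with hs | rfl | hs
  · have hsv : s • v = (-s) • (-v) := by rw [neg_smul_neg]
    rw [hsv, hg.rightLineDeriv_smul hξ (neg_pos.2 hs)]
    nlinarith
  · simp [rightLineDeriv_zero]
  · rw [hg.rightLineDeriv_smul hξ hs]
    exact mul_le_mul_of_nonneg_left hpos hs.le

lemma ConvexOn.exists_subgradient_apply_eq (hg : ConvexOn ℝ D g) (hξ : ξ ∈ interior D)
    (hgc : ContinuousAt g ξ) {c : ℝ} (hpos : c ≤ rightLineDeriv g ξ v)
    (hneg : -c ≤ rightLineDeriv g ξ (-v)) :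
    ∃ φ ∈ SubdifferentialWithin g D ξ, φ v = c := by
  have hdom := hg.mul_le_rightLineDeriv_smul hξ hpos hneg
  have hker : ∀ s : ℝ, s • v = 0 → s • c = 0 := fun s hs => by
    have h1 := hdom s
    have h2 := hdom (-s)
    rw [neg_smul, hs, neg_zero, rightLineDeriv_zero] at h2
    rw [hs, rightLineDeriv_zero] at h1
    rw [smul_eq_mul]
    linarith
  obtain ⟨φ, hφv, hφle⟩ := exists_extension_of_le_sublinear
    (LinearPMap.mkSpanSingleton' v c hker) (rightLineDeriv g ξ)
    (fun _ hc u => hg.rightLineDeriv_smul hξ hc u) (hg.rightLineDeriv_add_le hξ) (by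
      rintro ⟨_, hz⟩
      obtain ⟨s, rfl⟩ := Submodule.mem_span_singleton.1 hz
      rw [LinearPMap.mkSpanSingleton'_apply, RingHom.id_apply, smul_eq_mul]
      exact hdom s)
  have hsub : ∀ z ∈ D, φ (z - ξ) ≤ g z - g ξ := fun z hz => by
    simpa using (hφle (z - ξ)).trans
      (hg.rightLineDeriv_le_slope hξ one_pos (u := z - ξ) (by simpa using hz))
  refine ⟨⟨φ, φ.continuous_of_le_sub_of_continuousAt (mem_interior_iff_mem_nhds.1 hξ) hgc hsub⟩,
    hsub, ?_⟩
  exact (hφv ⟨v, Submodule.mem_span_singleton_self v⟩).trans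
    (LinearPMap.mkSpanSingleton'_apply_self _ _ _ _)

lemma ConvexOn.le_rightLineDeriv (hg : ConvexOn ℝ D g) (hξ : ξ ∈ interior D) {c : ℝ}
    (h : ∀ᶠ t in 𝓝[>] (0 : ℝ), c * t ≤ g (ξ + t • u) - g ξ) : c ≤ rightLineDeriv g ξ u := by
  refine ge_of_tendsto (hg.tendsto_slope_rightLineDeriv hξ u) ?_
  filter_upwards [h, self_mem_nhdsWithin] with t ht (htpos : 0 < t)
  rw [le_div_iff₀ htpos]
  linarith

lemma ConvexOn.exists_subgradient_apply_eq_of_isLocalMin (hg : ConvexOn ℝ D g)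
    (hξ : ξ ∈ interior D) (hgc : ContinuousAt g ξ) {c : ℝ}
    (hmin : IsLocalMin (fun t : ℝ => g (ξ + t • v) - c * t) 0) :
    ∃ φ ∈ SubdifferentialWithin g D ξ, φ v = c := by
  have hloc : ∀ᶠ t in 𝓝 (0 : ℝ), c * t ≤ g (ξ + t • v) - g ξ :=
    hmin.mono fun t ht => by simp only [zero_smul, add_zero, mul_zero, sub_zero] at ht; linarith
  have hloc' : ∀ᶠ t in 𝓝 (0 : ℝ), -c * t ≤ g (ξ + t • -v) - g ξ := by
    filter_upwards [(continuous_neg.tendsto' 0 0 neg_zero).eventually hloc] with t ht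
    rw [smul_neg, ← neg_smul]
    linarith
  exact hg.exists_subgradient_apply_eq hξ hgc (hg.le_rightLineDeriv hξ (nhdsWithin_le_nhds hloc))
    (hg.le_rightLineDeriv hξ (nhdsWithin_le_nhds hloc'))

lemma ConvexOn.exists_isLocalMin_sub_secant (hg : ConvexOn ℝ D g) (hgc : ContinuousOn g D)
    {x y : X} (hxy : segment ℝ x y ⊆ D) :
    ∃ t₀ ∈ Ioo (0 : ℝ) 1, IsLocalMin
      (fun t : ℝ => g (x + t₀ • (y - x) + t • (y - x)) - (g y - g x) * t) 0 := by
  have hline : ∀ t ∈ Icc (0 : ℝ) 1, x + t • (y - x) ∈ D := fun t ht =>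
    hxy (segment_eq_image' ℝ x y ▸ mem_image_of_mem _ ht)
  set ψ : ℝ → ℝ := fun t => g (x + t • (y - x)) - (g y - g x) * t
  have hψ : ConvexOn ℝ (Icc 0 1) ψ :=
    ((hg.comp_line x (y - x)).subset hline (convex_Icc 0 1)).sub
      ((LinearMap.mulLeft ℝ (g y - g x)).concaveOn (convex_Icc 0 1))
  have hψc : ContinuousOn ψ (Icc 0 1) :=
    (hgc.comp (by fun_prop) hline).sub (by fun_prop)
  obtain ⟨t₀, ht₀, hmin⟩ := hψ.exists_isMinOn_Ioo one_pos hψc (by simp [ψ])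
  refine ⟨t₀, ht₀, ?_⟩
  filter_upwards [((continuous_const_add t₀).tendsto' 0 t₀ (add_zero t₀)).eventually
    (hmin.isLocalMin (Icc_mem_nhds ht₀.1 ht₀.2))] with t ht
  simp only [ψ, add_smul, ← add_assoc, zero_smul, add_zero, mul_zero, sub_zero] at ht ⊢
  linarith

end

theorem convex_mean_value_general {X : Type*} [NormedAddCommGroup X] [NormedSpace ℝ X]
    (D : Set X) (hDcvx : Convex ℝ D)
    (g : X → ℝ) (hgcont : ContinuousOn g D) (hgcvx : ConvexOn ℝ D g) :
    ∀ x ∈ interior D, ∀ y ∈ interior D,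
      ∃ ξ ∈ segment ℝ x y, ∃ φ ∈ SubdifferentialWithin g D ξ,
        g y - g x = φ (y - x) := by
  intro x hx y hy
  have hseg : segment ℝ x y ⊆ interior D := hDcvx.interior.segment_subset hx hy
  obtain ⟨t₀, ht₀, hmin⟩ :=
    hgcvx.exists_isLocalMin_sub_secant hgcont (hseg.trans interior_subset)
  have hξ : x + t₀ • (y - x) ∈ segment ℝ x y :=
    segment_eq_image' ℝ x y ▸ mem_image_of_mem _ (Ioo_subset_Icc_self ht₀)
  obtain ⟨φ, hφ, hφv⟩ := hgcvx.exists_subgradient_apply_eq_of_isLocalMin (hseg hξ)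
    (hgcont.continuousAt (mem_interior_iff_mem_nhds.1 (hseg hξ))) hmin
  exact ⟨_, hξ, φ, hφ, hφv.symm⟩

/-- Mean-value theorem for continuous convex functions on a closed convex set with
nonempty interior: for `x, y` in the interior of `D` there are `ξ` in the segment `[x, y]`
and a subgradient `φ ∈ ∂g(ξ)` with `g y - g x = φ (y - x)`. -/
theorem convex_mean_value {X : Type*} [NormedAddCommGroup X] [NormedSpace ℝ X]
    [CompleteSpace X] (D : Set X) (hDcl : IsClosed D) (hDcvx : Convex ℝ D)
    (hDint : (interior D).Nonempty)
    (g : X → ℝ) (hgcont : ContinuousOn g D) (hgcvx : ConvexOn ℝ D g) :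
    ∀ x ∈ interior D, ∀ y ∈ interior D,
      ∃ ξ ∈ segment ℝ x y, ∃ φ ∈ SubdifferentialWithin g D ξ,
        g y - g x = φ (y - x) :=
  convex_mean_value_general D hDcvx g hgcont hgcvx
end

section
/- Let X be a real Banach space, μ a convex MNC on X, and I = [0,a] with a > 0. Let G be a nonempty set of Bochner integrable functions g : I → X such that there exists a Lebesgue integrable ψ : I → [0,∞) with sup_{g∈G} ‖g(t)‖ ≤ ψ(t) for a.e. t ∈ I, and assume 𝕁_G : I → C_b(Ω) is strongly measurable. Then μ(∫₀ᵗ G(s) ds) ≤ ∫₀ᵗ μ(G(s)) ds holds (with the right side a Lebesgue integral in [0,∞]) whenever either (i) 0 < t ≤ min{1, a}, or (ii) μ is a sublinear MNC and 0 < t ≤ a. -/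
open Set MeasureTheory Bornology Pointwise

/-- A sublinear MNC: a convex MNC which is in addition positively homogeneous and
subadditive. -/
structure IsSublinearMNC (X : Type*) [NormedAddCommGroup X] [NormedSpace ℝ X]
    (μ : Set X → ℝ) extends IsConvexMNC X μ : Prop where
  smul_eq : ∀ B : Set X, B.Nonempty → IsBounded B → ∀ k : ℝ, 0 ≤ k → μ (k • B) = k * μ B
  add_le : ∀ A B : Set X, A.Nonempty → B.Nonempty → IsBounded A → IsBounded B →
    μ (A + B) ≤ μ A + μ B

/-- `Ω`: the closed unit ball of the dual space `X*`, with the norm topology. -/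
abbrev DualUnitBall (X : Type*) [NormedAddCommGroup X] [NormedSpace ℝ X] :
    Set (StrongDual ℝ X) :=
  Metric.closedBall 0 1

/-!
Cut `(0, t]`, up to a set on which `∫ ψ` is small, into finitely many measurable pieces `E` on
which `𝕁_G` oscillates by less than `ε` (Egorov's theorem applied to simple approximations of
`𝕁_G`). Since `𝕁_G(s)` is the support function of `G(s)` on the dual unit ball, Hahn–Banach
separation puts every `g(s)`, `s ∈ E`, in the closed `ε`-neighbourhood of `co G(s_E)`, where
`s_E ∈ E` is a sample point at which `μ(G(·))` is almost minimal on `E`. Averaging, `∫₀ᵗ G`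
lies within `O(ε)` of `∑_E |E| • co G(s_E)`; convexity of `μ` with `∑_E |E| ≤ t ≤ 1`, or
sublinearity, bounds `μ` of that sum by the lower Riemann sum `∑_E |E| μ(G(s_E))`, which is
at most `∫₀ᵗ μ(G(s)) ds + O(ε)`. The `O(ε)`-neighbourhood costs `O(ε)` by convexity of `μ`.
-/

open Metric
open scoped ENNReal

theorem Set.Nonempty.finsetSum {M ι : Type*} [AddCommMonoid M] {s : Finset ι} {A : ι → Set M}
    (h : ∀ i ∈ s, (A i).Nonempty) : (∑ i ∈ s, A i).Nonempty := by
  classical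
  choose! a ha using h
  exact ⟨_, Set.finsetSum_mem_finsetSum s A a ha⟩

theorem Bornology.IsBounded.finsetSum {E ι : Type*} [SeminormedAddCommGroup E] {s : Finset ι}
    {A : ι → Set E} (h : ∀ i ∈ s, IsBounded (A i)) : IsBounded (∑ i ∈ s, A i) := by
  classical
  induction s using Finset.induction_on with
  | empty => exact isBounded_singleton
  | insert i s hi ih =>
    rw [Finset.sum_insert hi]
    exact isBounded_add (h i (by simp)) (ih fun j hj => h j (by simp [hj]))

theorem finsetSum_add_closedBall_subset {E ι : Type*} [SeminormedAddCommGroup E]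
    (s : Finset ι) (A : ι → Set E) (r : ι → ℝ) :
    ∑ i ∈ s, (A i + closedBall 0 (r i)) ⊆ ∑ i ∈ s, A i + closedBall 0 (∑ i ∈ s, r i) := by
  classical
  induction s using Finset.induction_on with
  | empty => simp [Set.subset_def, Set.mem_zero]
  | insert i s hi ih =>
    simp only [Finset.sum_insert hi]
    rintro _ ⟨_, ⟨a, ha, e, he, rfl⟩, _, hb', rfl⟩
    obtain ⟨a', ha', e', he', rfl⟩ := ih hb'
    refine ⟨a + a', add_mem_add ha ha', e + e', mem_closedBall_zero_iff.2 ?_, by simp; abel⟩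
    exact (norm_add_le e e').trans
      (add_le_add (mem_closedBall_zero_iff.1 he) (mem_closedBall_zero_iff.1 he'))

theorem closure_add_closedBall_subset {E : Type*} [SeminormedAddCommGroup E] {U : Set E}
    {r ε : ℝ} (hε : 0 < ε) : closure (U + closedBall 0 r) ⊆ U + closedBall 0 (r + ε) := by
  intro y hy
  obtain ⟨_, ⟨u, hu, e, he, rfl⟩, hyz⟩ := Metric.mem_closure_iff.1 hy ε hε
  refine ⟨u, hu, y - u, mem_closedBall_zero_iff.2 ?_, add_sub_cancel _ _⟩
  calc ‖y - u‖ = ‖e + (y - (u + e))‖ := by congr 1; abel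
    _ ≤ ‖e‖ + ‖y - (u + e)‖ := norm_add_le _ _
    _ ≤ r + ε := add_le_add (mem_closedBall_zero_iff.1 he) (by rw [← dist_eq_norm]; exact hyz.le)

section Separation

variable {X : Type*} [NormedAddCommGroup X] [NormedSpace ℝ X]

theorem mem_closure_convexHull_add_closedBall {B : Set X} (hB : B.Nonempty) {ε : ℝ}
    (hε : 0 ≤ ε) {x : X}
    (h : ∀ ω : StrongDual ℝ X, ‖ω‖ ≤ 1 → ∀ c, (∀ b ∈ B, ω b ≤ c) → ω x ≤ c + ε) :
    x ∈ closure (convexHull ℝ B + closedBall 0 ε) := by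
  by_contra hx
  obtain ⟨f, u, hfC, hux⟩ := geometric_hahn_banach_closed_point
    ((convex_convexHull ℝ B).add (convex_closedBall 0 ε)).closure isClosed_closure hx
  have hf_lt : ∀ b ∈ B, ∀ z ∈ closedBall (0 : X) ε, f b + f z < u := fun b hb z hz => by
    simpa using hfC _ (subset_closure (add_mem_add (subset_convexHull ℝ B hb) hz))
  have hbound : ∀ b ∈ B, f b + ε * ‖f‖ ≤ u := by
    intro b hb
    rcases hε.eq_or_lt with rfl | hε
    · simpa using (hf_lt b hb 0 (by simp)).le
    have hfb : ‖f‖ ≤ (u - f b) / ε := f.opNorm_bound_of_ball_bound hε _ fun z hz => by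
      have h₁ := hf_lt b hb z hz
      have h₂ := hf_lt b hb (-z) (by simpa using hz)
      rw [map_neg] at h₂
      rw [Real.norm_eq_abs, abs_le]
      constructor <;> linarith
    rw [le_div_iff₀ hε] at hfb
    linarith
  obtain ⟨b₀, hb₀⟩ := hB
  have hf : 0 < ‖f‖ := norm_pos_iff.2 fun hf0 => by
    have := hbound b₀ hb₀
    simp only [hf0, zero_apply, norm_zero] at this hux
    linarith
  have key := h (‖f‖⁻¹ • f) (by rw [norm_smul, norm_inv, norm_norm, inv_mul_cancel₀ hf.ne'])
    (‖f‖⁻¹ * u - ε) fun b hb => by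
      rw [smul_apply, smul_eq_mul, le_sub_iff_add_le,
        ← mul_le_mul_iff_of_pos_left hf, mul_add, mul_inv_cancel_left₀ hf.ne',
        mul_inv_cancel_left₀ hf.ne']
      linarith [hbound b hb]
  rw [smul_apply, smul_eq_mul, sub_add_cancel] at key
  have := mul_lt_mul_of_pos_left hux (inv_pos.2 hf)
  linarith

theorem mem_closure_convexHull_image_add_closedBall_of_dist_le {α : Type*} {G : Set (α → X)}
    (hG : G.Nonempty) {J : α → BoundedContinuousFunction (DualUnitBall X) ℝ} {x y : α}
    (hJx : ∀ ω, J x ω = ⨆ g : G, (ω : StrongDual ℝ X) ((g : α → X) x))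
    (hJy : ∀ ω, J y ω = ⨆ g : G, (ω : StrongDual ℝ X) ((g : α → X) y))
    {r : ℝ} (hxr : ∀ g ∈ G, ‖g x‖ ≤ r) {ε : ℝ} (hε : 0 ≤ ε) (hxy : dist (J x) (J y) ≤ ε)
    {g : α → X} (hg : g ∈ G) :
    g x ∈ closure (convexHull ℝ ((fun g => g y) '' G) + closedBall 0 ε) := by
  have : Nonempty G := hG.to_subtype
  refine mem_closure_convexHull_add_closedBall (hG.image _) hε fun ω hω c hc => ?_
  set ω' : DualUnitBall X := ⟨ω, mem_closedBall_zero_iff.2 hω⟩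
  have hbdd : BddAbove (range fun g : G => ω ((g : α → X) x)) :=
    ⟨r, by
      rintro _ ⟨g, rfl⟩
      exact (le_abs_self _).trans ((ω.le_opNorm _).trans
        (by simpa using mul_le_mul hω (hxr g g.2) (norm_nonneg _) zero_le_one))⟩
  calc ω (g x) ≤ J x ω' := (hJx ω').symm ▸ le_ciSup hbdd ⟨g, hg⟩
    _ ≤ J y ω' + ε := by
      have := (BoundedContinuousFunction.dist_coe_le_dist ω').trans hxy
      rw [Real.dist_eq, abs_le] at this
      linarith
    _ ≤ c + ε := by
      rw [hJy ω']
      gcongr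
      exact ciSup_le fun g => hc _ ⟨g, g.2, rfl⟩

end Separation

section MNC

variable {X : Type*} [NormedAddCommGroup X] [NormedSpace ℝ X] {μ : Set X → ℝ}

theorem IsConvexMNC.map_zero (hμ : IsConvexMNC X μ) : μ 0 = 0 :=
  (hμ.eq_zero_iff {0} (singleton_nonempty 0) isBounded_singleton).2 (by simp)

theorem IsConvexMNC.map_sum_smul_le (hμ : IsConvexMNC X μ) {ι : Type*} (s : Finset ι)
    (c : ι → ℝ) (A : ι → Set X) (hc : ∀ i ∈ s, 0 ≤ c i) (hs : ∑ i ∈ s, c i ≤ 1)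
    (hA : ∀ i ∈ s, (A i).Nonempty ∧ IsBounded (A i)) :
    μ (∑ i ∈ s, c i • A i) ≤ ∑ i ∈ s, c i * μ (A i) := by
  classical
  induction s using Finset.induction_on generalizing c with
  | empty => simp [hμ.map_zero]
  | insert i s hi ih =>
    simp only [Finset.sum_insert hi, Finset.mem_insert, forall_eq_or_imp] at hc hs hA ⊢
    set d := 1 - c i
    have hsd : ∑ j ∈ s, c j ≤ d := by linarith
    -- when `d = 0` all remaining weights vanish, so `d * (c j / d) = c j` in every case
    have hcancel : ∀ j ∈ s, d * (c j / d) = c j := fun j hj => mul_div_cancel_of_imp' fun hd =>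
      le_antisymm ((Finset.single_le_sum hc.2 hj).trans (hd ▸ hsd)) (hc.2 j hj)
    have hU : ∑ j ∈ s, c j • A j = d • ∑ j ∈ s, (c j / d) • A j := by
      rw [Finset.smul_sum]
      exact Finset.sum_congr rfl fun j hj => by rw [smul_smul, hcancel j hj]
    have hUne : (∑ j ∈ s, (c j / d) • A j).Nonempty :=
      Set.Nonempty.finsetSum fun j hj => (hA.2 j hj).1.smul_set
    have hUb : IsBounded (∑ j ∈ s, (c j / d) • A j) :=
      IsBounded.finsetSum fun j hj => (hA.2 j hj).2.smul₀ _
    have hd : 0 ≤ d := (Finset.sum_nonneg hc.2).trans hsd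
    have hweights : ∑ j ∈ s, c j / d ≤ 1 := by
      rw [← Finset.sum_div]
      exact div_le_one_of_le₀ hsd hd
    have hih := ih (fun j => c j / d) (fun j hj => div_nonneg (hc.2 j hj) hd) hweights hA.2
    calc μ (c i • A i + ∑ j ∈ s, c j • A j)
        ≤ c i * μ (A i) + d * μ (∑ j ∈ s, (c j / d) • A j) := by
          rw [hU]
          exact hμ.convex _ _ hA.1.1 hUne hA.1.2 hUb _ hc.1 (by linarith)
      _ ≤ c i * μ (A i) + d * ∑ j ∈ s, c j / d * μ (A j) := by gcongr
      _ = c i * μ (A i) + ∑ j ∈ s, c j * μ (A j) := by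
          rw [Finset.mul_sum]
          exact congrArg _ (Finset.sum_congr rfl fun j hj => by rw [← mul_assoc, hcancel j hj])

theorem IsSublinearMNC.map_sum_smul_le (hμ : IsSublinearMNC X μ) {ι : Type*} (s : Finset ι)
    (c : ι → ℝ) (A : ι → Set X) (hc : ∀ i ∈ s, 0 ≤ c i)
    (hA : ∀ i ∈ s, (A i).Nonempty ∧ IsBounded (A i)) :
    μ (∑ i ∈ s, c i • A i) ≤ ∑ i ∈ s, c i * μ (A i) := by
  classical
  induction s using Finset.induction_on with
  | empty => simp [hμ.map_zero]
  | insert i s hi ih =>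
    simp only [Finset.sum_insert hi, Finset.mem_insert, forall_eq_or_imp] at hc hA ⊢
    calc μ (c i • A i + ∑ j ∈ s, c j • A j)
        ≤ μ (c i • A i) + μ (∑ j ∈ s, c j • A j) :=
          hμ.add_le _ _ hA.1.1.smul_set (Set.Nonempty.finsetSum fun j hj => (hA.2 j hj).1.smul_set)
            (hA.1.2.smul₀ _) (IsBounded.finsetSum fun j hj => (hA.2 j hj).2.smul₀ _)
      _ ≤ c i * μ (A i) + ∑ j ∈ s, c j * μ (A j) := by
          rw [hμ.smul_eq _ hA.1.1 hA.1.2 _ hc.1]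
          grw [ih hc.2 hA.2]

theorem IsConvexMNC.le_add_mul_of_subset_add_closedBall (hμ : IsConvexMNC X μ) {Z W : Set X}
    (hZ : Z.Nonempty) {R δ : ℝ} (hZR : Z ⊆ closedBall 0 R) (hW : IsBounded W) (hδ₀ : 0 < δ)
    (hδ₁ : δ ≤ 1) (hZW : Z ⊆ W + closedBall 0 δ) :
    μ Z ≤ μ W + δ * μ (closedBall 0 (R + 2)) := by
  -- truncating `W` keeps `W' + closedBall 0 1` inside a ball that does not depend on `W`
  set W' := W ∩ closedBall 0 (R + 1)
  have hZW' : Z ⊆ W' + closedBall 0 δ := by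
    intro z hz
    obtain ⟨w, hw, e, he, rfl⟩ := hZW hz
    refine ⟨w, ⟨hw, mem_closedBall_zero_iff.2 ?_⟩, e, he, rfl⟩
    have hwe : ‖w + e‖ ≤ R := mem_closedBall_zero_iff.1 (hZR hz)
    calc ‖w‖ = ‖w + e - e‖ := by rw [add_sub_cancel_right]
      _ ≤ ‖w + e‖ + ‖e‖ := norm_sub_le _ _
      _ ≤ R + 1 := by linarith [mem_closedBall_zero_iff.1 he]
  have hW'ne : W'.Nonempty := by
    obtain ⟨z, hz⟩ := hZ
    obtain ⟨w, hw, -⟩ := hZW' hz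
    exact ⟨w, hw⟩
  -- `w + e = (1 - δ) • w + δ • (w + δ⁻¹ • e)`
  have hsplit : W' + closedBall 0 δ ⊆ (1 - δ) • W' + δ • (W' + closedBall 0 1) := by
    rintro _ ⟨w, hw, e, he, rfl⟩
    refine ⟨(1 - δ) • w, smul_mem_smul_set hw, δ • (w + δ⁻¹ • e),
      smul_mem_smul_set (add_mem_add hw ?_), ?_⟩
    · rw [mem_closedBall_zero_iff, norm_smul, norm_inv, Real.norm_of_nonneg hδ₀.le,
        inv_mul_le_one₀ hδ₀]
      exact mem_closedBall_zero_iff.1 he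
    · simp only [smul_add, smul_inv_smul₀ hδ₀.ne', sub_smul, one_smul]
      abel
  have hball : W' + closedBall 0 1 ⊆ closedBall (0 : X) (R + 2) := by
    rintro _ ⟨w, hw, e, he, rfl⟩
    rw [mem_closedBall_zero_iff] at *
    linarith [norm_add_le w e, mem_closedBall_zero_iff.1 hw.2]
  have hW'b : IsBounded W' := hW.subset inter_subset_left
  have hcomb_b : IsBounded ((1 - δ) • W' + δ • (W' + closedBall 0 1)) :=
    isBounded_add (hW'b.smul₀ _) ((isBounded_closedBall.subset hball).smul₀ _)
  have hconv := hμ.convex W' (W' + closedBall 0 1) hW'ne (hW'ne.add (nonempty_closedBall.2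
    zero_le_one)) hW'b (isBounded_closedBall.subset hball) (1 - δ) (by linarith) (by linarith)
  rw [sub_sub_cancel] at hconv
  have hW'W := hμ.mono W W' hW'ne hW inter_subset_left
  have hball_le := hμ.mono _ _ (hW'ne.add (nonempty_closedBall.2 zero_le_one))
    isBounded_closedBall hball
  calc μ Z ≤ μ ((1 - δ) • W' + δ • (W' + closedBall 0 1)) :=
        hμ.mono _ _ hZ hcomb_b (hZW'.trans hsplit)
    _ ≤ (1 - δ) * μ W' + δ * μ (W' + closedBall 0 1) := hconv
    _ ≤ μ W + δ * μ (closedBall 0 (R + 2)) := by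
        have := hμ.nonneg W' hW'ne hW'b
        nlinarith

end MNC

section Integration

open Filter Topology

theorem ENNReal.le_of_forall_pos_le_add_ofReal_mul {a b : ℝ≥0∞} {C ε₀ : ℝ} (hε₀ : 0 < ε₀)
    (h : ∀ ε, 0 < ε → ε ≤ ε₀ → a ≤ b + ENNReal.ofReal (ε * C)) : a ≤ b := by
  have hlim : Tendsto (fun ε => b + ENNReal.ofReal (ε * C)) (𝓝[>] 0) (𝓝 b) := by
    have := (ENNReal.continuous_ofReal.comp (continuous_mul_const C)).tendsto 0
    simp only [Function.comp_def, zero_mul, ENNReal.ofReal_zero] at this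
    simpa using tendsto_const_nhds.add (this.mono_left nhdsWithin_le_nhds)
  exact ge_of_tendsto hlim (by filter_upwards [Ioc_mem_nhdsGT hε₀] with ε hε using h ε hε.1 hε.2)

variable {α : Type*} [MeasurableSpace α] (ν : Measure α)

theorem exists_mem_measure_mul_le_setLIntegral {E : Set α} (hE : MeasurableSet E)
    {f : α → ℝ≥0∞} (hf : ∃ x ∈ E, f x ≠ ∞) {η : ℝ≥0∞} (hη : η ≠ 0) :
    ∃ x ∈ E, ν E * f x ≤ ∫⁻ y in E, f y ∂ν + ν E * η := by
  obtain ⟨x₀, hx₀, hfx₀⟩ := hf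
  have : Nonempty E := ⟨⟨x₀, hx₀⟩⟩
  set I := ⨅ y : E, f y
  have hI : I ≠ ∞ := ne_top_of_le_ne_top hfx₀ (iInf_le (fun y : E => f y) ⟨x₀, hx₀⟩)
  obtain ⟨⟨x, hx⟩, hxI⟩ := iInf_lt_iff.1 (ENNReal.lt_add_right hI hη)
  refine ⟨x, hx, ?_⟩
  have hIE : ν E * I ≤ ∫⁻ y in E, f y ∂ν := by
    rw [mul_comm, ← setLIntegral_const]
    exact setLIntegral_mono' hE fun y hy => iInf_le (fun y : E => f y) ⟨y, hy⟩
  calc ν E * f x ≤ ν E * (I + η) := by gcongr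
    _ = ν E * I + ν E * η := mul_add _ _ _
    _ ≤ ∫⁻ y in E, f y ∂ν + ν E * η := by gcongr

theorem exists_forall_mem_sum_ofReal_le_lintegral [Nonempty α] [IsFiniteMeasure ν]
    {𝓔 : Finset (Set α)} (hdisj : (𝓔 : Set (Set α)).PairwiseDisjoint id)
    (h𝓔 : ∀ E ∈ 𝓔, MeasurableSet E ∧ E.Nonempty) (v : α → ℝ) {ε : ℝ} (hε : 0 < ε) :
    ∃ pt : Set α → α, (∀ E ∈ 𝓔, pt E ∈ E) ∧
      ∑ E ∈ 𝓔, ENNReal.ofReal (ν.real E * v (pt E)) ≤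
        ∫⁻ x, ENNReal.ofReal (v x) ∂ν + ENNReal.ofReal (ν.real univ * ε) := by
  have hpt : ∀ E ∈ 𝓔, ∃ x ∈ E, ν E * ENNReal.ofReal (v x) ≤
      ∫⁻ y in E, ENNReal.ofReal (v y) ∂ν + ν E * ENNReal.ofReal ε := fun E hE =>
    exists_mem_measure_mul_le_setLIntegral ν (h𝓔 E hE).1
      (let ⟨x, hx⟩ := (h𝓔 E hE).2; ⟨x, hx, ENNReal.ofReal_ne_top⟩)
      (ENNReal.ofReal_pos.2 hε).ne'
  choose! pt hptE hpt using hpt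
  refine ⟨pt, hptE, ?_⟩
  calc ∑ E ∈ 𝓔, ENNReal.ofReal (ν.real E * v (pt E))
      = ∑ E ∈ 𝓔, ν E * ENNReal.ofReal (v (pt E)) := Finset.sum_congr rfl fun E _ => by
        rw [ENNReal.ofReal_mul measureReal_nonneg, ofReal_measureReal]
    _ ≤ ∑ E ∈ 𝓔, (∫⁻ y in E, ENNReal.ofReal (v y) ∂ν + ν E * ENNReal.ofReal ε) :=
        Finset.sum_le_sum hpt
    _ = ∫⁻ y in ⋃ E ∈ 𝓔, E, ENNReal.ofReal (v y) ∂ν + ν (⋃ E ∈ 𝓔, E) * ENNReal.ofReal ε := by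
        rw [Finset.sum_add_distrib, ← Finset.sum_mul,
          lintegral_biUnion_finset (t := fun E => E) hdisj (fun E hE => (h𝓔 E hE).1),
          measure_biUnion_finset (f := fun E => E) hdisj (fun E hE => (h𝓔 E hE).1)]
    _ ≤ ∫⁻ x, ENNReal.ofReal (v x) ∂ν + ν univ * ENNReal.ofReal ε := by
        gcongr
        · exact Measure.restrict_le_self
        · exact subset_univ _
    _ = ∫⁻ x, ENNReal.ofReal (v x) ∂ν + ENNReal.ofReal (ν.real univ * ε) := by
        rw [ENNReal.ofReal_mul measureReal_nonneg, ofReal_measureReal]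

theorem setIntegral_mem_smul_of_ae_mem {E : Type*} [NormedAddCommGroup E] [NormedSpace ℝ E]
    [CompleteSpace E] {ν : Measure α} {s : Set α} (hs : ν s ≠ ∞) {C : Set E}
    (hC : Convex ℝ C) (hCc : IsClosed C) (hCne : C.Nonempty) {g : α → E}
    (hg : IntegrableOn g s ν) (hgC : ∀ᵐ x ∂ν.restrict s, g x ∈ C) :
    ∫ x in s, g x ∂ν ∈ ν.real s • C := by
  rcases eq_or_ne (ν s) 0 with h0 | h0
  · rw [Measure.restrict_eq_zero.2 h0, integral_zero_measure, measureReal_def, h0,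
      ENNReal.toReal_zero, zero_smul_set hCne]
    rfl
  · refine ⟨_, hC.set_average_mem hCc h0 hs hgC hg, ?_⟩
    dsimp only
    rw [setAverage_eq, smul_inv_smul₀]
    exact ENNReal.toReal_ne_zero.2 ⟨h0, hs⟩

end Integration

theorem MeasureTheory.SimpleFunc.exists_finset_pairwiseDisjoint_const_on {α Y : Type*}
    [MeasurableSpace α] (φ : SimpleFunc α Y) {S : Set α} (hS : MeasurableSet S) :
    ∃ 𝓔 : Finset (Set α), (𝓔 : Set (Set α)).PairwiseDisjoint id ∧
      (∀ E ∈ 𝓔, MeasurableSet E ∧ E.Nonempty ∧ E ⊆ Sᶜ ∧ ∀ x ∈ E, ∀ y ∈ E, φ x = φ y) ∧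
      (⋃ E ∈ 𝓔, E)ᶜ ⊆ S := by
  classical
  set piece : Y → Set α := fun y => φ ⁻¹' {y} \ S
  refine ⟨(φ.range.image piece).filter (·.Nonempty), ?_, ?_, ?_⟩
  · intro E₁ h₁ E₂ h₂ hne
    simp only [Finset.coe_filter, Finset.mem_image] at h₁ h₂
    obtain ⟨⟨y₁, -, rfl⟩, -⟩ := h₁
    obtain ⟨⟨y₂, -, rfl⟩, -⟩ := h₂
    have hy : y₁ ≠ y₂ := fun h => hne (h ▸ rfl)
    exact Set.disjoint_left.2 fun x hx₁ hx₂ => hy (hx₁.1.symm.trans hx₂.1)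
  · intro E hE
    simp only [Finset.mem_filter, Finset.mem_image] at hE
    obtain ⟨⟨y, -, rfl⟩, hne⟩ := hE
    exact ⟨(φ.measurableSet_fiber y).diff hS, hne, fun x hx => hx.2,
      fun x hx x' hx' => hx.1.trans hx'.1.symm⟩
  · intro x hx
    by_contra hxS
    refine hx (mem_biUnion (x := piece (φ x)) ?_ ⟨rfl, hxS⟩)
    simp only [Finset.coe_filter, Finset.mem_image]
    exact ⟨⟨φ x, φ.mem_range_self x, rfl⟩, x, rfl, hxS⟩

theorem exists_finset_partition_dist_lt {α Y : Type*} [MeasurableSpace α] [PseudoMetricSpace Y]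
    {ν : Measure α} [IsFiniteMeasure ν] {F : α → Y} (hF : AEStronglyMeasurable F ν)
    {P : α → Prop} (hP : ∀ᵐ x ∂ν, P x) {ε : ℝ} (hε : 0 < ε) {δ : ℝ≥0∞} (hδ : 0 < δ) :
    ∃ 𝓔 : Finset (Set α), (𝓔 : Set (Set α)).PairwiseDisjoint id ∧
      (∀ E ∈ 𝓔, MeasurableSet E ∧ E.Nonempty ∧ ∀ x ∈ E, P x ∧ ∀ y ∈ E, dist (F x) (F y) < ε) ∧
      ν (⋃ E ∈ 𝓔, E)ᶜ < δ := by
  obtain ⟨r, hr₀, hrδ⟩ := ENNReal.lt_iff_exists_nnreal_btwn.1 hδ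
  have hF' := hF.stronglyMeasurable_mk
  obtain ⟨T, hTm, hTν, hunif⟩ := tendstoUniformlyOn_of_ae_tendsto' (μ := ν)
    (fun n => (hF'.approx n).stronglyMeasurable) hF' (ae_of_all _ hF'.tendsto_approx)
    (ε := r) (by exact_mod_cast hr₀)
  obtain ⟨n, hn⟩ := (Metric.tendstoUniformlyOn_iff.1 hunif (ε / 2) (half_pos hε)).exists
  set Z := toMeasurable ν {x | ¬(P x ∧ F x = hF.mk F x)}
  have hZ : ν Z = 0 := by
    rw [measure_toMeasurable, ← ae_iff]
    exact hP.and hF.ae_eq_mk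
  have hgood : ∀ x ∉ Z, P x ∧ F x = hF.mk F x := fun x hx => by
    by_contra h
    exact hx (subset_toMeasurable _ _ h)
  obtain ⟨𝓔, hdisj, h𝓔, hcover⟩ :=
    (hF'.approx n).exists_finset_pairwiseDisjoint_const_on
      (hTm.union (measurableSet_toMeasurable _ _))
  refine ⟨𝓔, hdisj, fun E hE => ?_, ?_⟩
  · obtain ⟨hEm, hne, hEc, hconst⟩ := h𝓔 E hE
    have hgood' : ∀ x ∈ E, x ∉ T ∧ P x ∧ F x = hF.mk F x := fun x hx =>
      ⟨fun h => hEc hx (Or.inl h), hgood x fun h => hEc hx (Or.inr h)⟩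
    refine ⟨hEm, hne, fun x hx => ⟨(hgood' x hx).2.1, fun y hy => ?_⟩⟩
    rw [(hgood' x hx).2.2, (hgood' y hy).2.2]
    calc dist (hF.mk F x) (hF.mk F y)
        ≤ dist (hF.mk F x) (hF'.approx n x) + dist (hF'.approx n y) (hF.mk F y) := by
          rw [hconst x hx y hy]; exact dist_triangle _ _ _
      _ < ε / 2 + ε / 2 := by
          gcongr
          · exact hn x (hgood' x hx).1
          · rw [dist_comm]; exact hn y (hgood' y hy).1
      _ = ε := add_halves ε
  · calc ν _ ≤ ν (T ∪ Z) := measure_mono hcover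
      _ ≤ ν T + ν Z := measure_union_le _ _
      _ < δ := by rw [hZ, add_zero]; exact hTν.trans_lt (by simpa using hrδ)

theorem integral_mem_finsetSum_add_closedBall {α X : Type*} [MeasurableSpace α]
    [NormedAddCommGroup X] [NormedSpace ℝ X] {ν : Measure α} {𝓔 : Finset (Set α)}
    (hdisj : (𝓔 : Set (Set α)).PairwiseDisjoint id) (hm : ∀ E ∈ 𝓔, MeasurableSet E)
    {g : α → X} (hg : Integrable g ν) {A : Set α → Set X} {r : Set α → ℝ} {ρ : ℝ}
    (hE : ∀ E ∈ 𝓔, ∫ x in E, g x ∂ν ∈ A E + closedBall 0 (r E))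
    (hN : ‖∫ x in (⋃ E ∈ 𝓔, E)ᶜ, g x ∂ν‖ ≤ ρ) :
    ∫ x, g x ∂ν ∈ ∑ E ∈ 𝓔, A E + closedBall 0 (∑ E ∈ 𝓔, r E + ρ) := by
  obtain ⟨w, hw, e, he, hwe⟩ :=
    finsetSum_add_closedBall_subset 𝓔 A r (Set.finsetSum_mem_finsetSum 𝓔 _ _ hE)
  refine ⟨w, hw, e + ∫ x in (⋃ E ∈ 𝓔, E)ᶜ, g x ∂ν, mem_closedBall_zero_iff.2
    ((norm_add_le _ _).trans (add_le_add (mem_closedBall_zero_iff.1 he) hN)), ?_⟩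
  dsimp only at hwe ⊢
  rw [← add_assoc, hwe, ← integral_biUnion_finset (s := fun E => E) 𝓔 hm hdisj
    fun E _ => hg.integrableOn, integral_add_compl (Finset.measurableSet_biUnion 𝓔 hm) hg]

section Main

variable {X : Type*} [NormedAddCommGroup X] [NormedSpace ℝ X] [CompleteSpace X]
  {α : Type*} [MeasurableSpace α] {ν : Measure α} [IsFiniteMeasure ν]

theorem setIntegral_mem_smul_convexHull_image_add_closedBall {G : Set (α → X)}
    (hG : G.Nonempty) {ψ : α → ℝ} {J : α → BoundedContinuousFunction (DualUnitBall X) ℝ} {E : Set α}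
    (hE : MeasurableSet E) {y : α} {ε : ℝ} (hε : 0 < ε)
    (hJy : ∀ ω, J y ω = ⨆ g : G, (ω : StrongDual ℝ X) ((g : α → X) y))
    (hEgood : ∀ x ∈ E, (∀ g ∈ G, ‖g x‖ ≤ ψ x) ∧
      (∀ ω, J x ω = ⨆ g : G, (ω : StrongDual ℝ X) ((g : α → X) x)) ∧ dist (J x) (J y) ≤ ε)
    {g : α → X} (hg : g ∈ G) (hgE : IntegrableOn g E ν) :
    ∫ x in E, g x ∂ν ∈ ν.real E • convexHull ℝ ((fun g : α → X => g y) '' G)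
      + closedBall 0 (ν.real E * (2 * ε)) := by
  have hmem := setIntegral_mem_smul_of_ae_mem (measure_ne_top ν E)
    ((convex_convexHull ℝ _).add (convex_closedBall 0 ε)).closure isClosed_closure
    (((hG.image _).convexHull).add (nonempty_closedBall.2 hε.le)).closure hgE
    (ae_restrict_of_forall_mem hE fun x hx =>
      mem_closure_convexHull_image_add_closedBall_of_dist_le hG (hEgood x hx).2.1 hJy
        (hEgood x hx).1 hε.le (hEgood x hx).2.2 hg)
  have hball : ν.real E • closedBall (0 : X) (ε + ε) = closedBall 0 (ν.real E * (2 * ε)) := by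
    rw [_root_.smul_closedBall _ _ (by positivity), smul_zero,
      Real.norm_of_nonneg measureReal_nonneg, two_mul]
  rw [← hball, ← smul_add]
  exact smul_set_mono (closure_add_closedBall_subset hε) hmem

theorem exists_integral_mem_sum_smul_convexHull_add_closedBall [Nonempty α] {G : Set (α → X)}
    (hG : G.Nonempty) (hGint : ∀ g ∈ G, Integrable g ν) {ψ : α → ℝ} (hψ : Integrable ψ ν)
    (hdom : ∀ᵐ x ∂ν, ∀ g ∈ G, ‖g x‖ ≤ ψ x) {J : α → BoundedContinuousFunction (DualUnitBall X) ℝ}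
    (hJ_eq : ∀ᵐ x ∂ν, ∀ ω : DualUnitBall X,
      J x ω = ⨆ g : G, (ω : StrongDual ℝ X) ((g : α → X) x))
    (hJ_meas : AEStronglyMeasurable J ν) (v : α → ℝ) {ε : ℝ} (hε : 0 < ε) :
    ∃ (𝓔 : Finset (Set α)) (pt : Set α → α),
      (∀ E ∈ 𝓔, IsBounded ((fun g : α → X => g (pt E)) '' G)) ∧
      ∑ E ∈ 𝓔, ν.real E ≤ ν.real univ ∧
      (∀ g ∈ G, ∫ x, g x ∂ν ∈ ∑ E ∈ 𝓔, ν.real E • convexHull ℝ ((fun g : α → X => g (pt E)) '' G)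
        + closedBall 0 ((2 * ν.real univ + 1) * ε)) ∧
      ∑ E ∈ 𝓔, ENNReal.ofReal (ν.real E * v (pt E)) ≤
        ∫⁻ x, ENNReal.ofReal (v x) ∂ν + ENNReal.ofReal (ν.real univ * ε) := by
  obtain ⟨δ, hδ, hψ_small⟩ := exists_pos_setLIntegral_lt_of_measure_lt hψ.lintegral_lt_top.ne
    (ENNReal.ofReal_pos.2 hε).ne'
  obtain ⟨𝓔, hdisj, h𝓔, hN⟩ := exists_finset_partition_dist_lt hJ_meas (hdom.and hJ_eq) hε hδ
  obtain ⟨pt, hptE, hsum⟩ := exists_forall_mem_sum_ofReal_le_lintegral ν hdisj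
    (fun E hE => ⟨(h𝓔 E hE).1, (h𝓔 E hE).2.1⟩) v hε
  have hN_small : ∀ g ∈ G, ‖∫ x in (⋃ E ∈ 𝓔, E)ᶜ, g x ∂ν‖ ≤ ε := by
    intro g hg
    have hle : ‖∫ x in (⋃ E ∈ 𝓔, E)ᶜ, g x ∂ν‖ₑ ≤ ENNReal.ofReal ε :=
      (enorm_integral_le_lintegral_enorm _).trans ((lintegral_mono_ae
        ((ae_restrict_of_ae hdom).mono fun x hx => by
          rw [← ofReal_norm]; exact ENNReal.ofReal_le_ofReal (hx g hg))).trans (hψ_small _ hN).le)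
    rwa [← ofReal_norm, ENNReal.ofReal_le_ofReal_iff hε.le] at hle
  have hweights : ∑ E ∈ 𝓔, ν.real E ≤ ν.real univ := by
    rw [← measureReal_biUnion_finset (f := fun E => E) hdisj fun E hE => (h𝓔 E hE).1]
    exact measureReal_mono (subset_univ _)
  refine ⟨𝓔, pt, fun E hE => ?_, hweights, fun g hg => ?_, hsum⟩
  · refine isBounded_closedBall (x := (0 : X)) (r := ψ (pt E)) |>.subset ?_
    rintro _ ⟨g, hg, rfl⟩
    exact mem_closedBall_zero_iff.2 (((h𝓔 E hE).2.2 _ (hptE E hE)).1.1 g hg)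
  · refine add_subset_add_left (closedBall_subset_closedBall ?_)
      (integral_mem_finsetSum_add_closedBall hdisj (fun E hE => (h𝓔 E hE).1) (hGint g hg)
        (fun E hE => setIntegral_mem_smul_convexHull_image_add_closedBall hG (h𝓔 E hE).1 hε
          ((h𝓔 E hE).2.2 _ (hptE E hE)).1.2 (fun x hx => ⟨((h𝓔 E hE).2.2 x hx).1.1,
            ((h𝓔 E hE).2.2 x hx).1.2, ((h𝓔 E hE).2.2 x hx).2 _ (hptE E hE) |>.le⟩)
          hg (hGint g hg).integrableOn) (hN_small g hg))
    rw [← Finset.sum_mul]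
    nlinarith

theorem IsConvexMNC.ofReal_le_lintegral_add_of_sum_smul_le {μ : Set X → ℝ}
    (hμ : IsConvexMNC X μ) [Nonempty α] {G : Set (α → X)} (hG : G.Nonempty)
    (hGint : ∀ g ∈ G, Integrable g ν) {ψ : α → ℝ} (hψ : Integrable ψ ν)
    (hdom : ∀ᵐ x ∂ν, ∀ g ∈ G, ‖g x‖ ≤ ψ x)
    {J : α → BoundedContinuousFunction (DualUnitBall X) ℝ}
    (hJ_eq : ∀ᵐ x ∂ν, ∀ ω : DualUnitBall X,
      J x ω = ⨆ g : G, (ω : StrongDual ℝ X) ((g : α → X) x))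
    (hJ_meas : AEStronglyMeasurable J ν)
    (hcomb : ∀ (𝓔 : Finset (Set α)) (c : Set α → ℝ) (A : Set α → Set X), (∀ E ∈ 𝓔, 0 ≤ c E) →
      ∑ E ∈ 𝓔, c E ≤ ν.real univ → (∀ E ∈ 𝓔, (A E).Nonempty ∧ IsBounded (A E)) →
      μ (∑ E ∈ 𝓔, c E • A E) ≤ ∑ E ∈ 𝓔, c E * μ (A E)) {ε : ℝ}
    (hε : 0 < ε) (hε₁ : (2 * ν.real univ + 1) * ε ≤ 1) :
    ENNReal.ofReal (μ ((fun g : α → X => ∫ x, g x ∂ν) '' G)) ≤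
      ∫⁻ x, ENNReal.ofReal (μ ((fun g : α → X => g x) '' G)) ∂ν + ENNReal.ofReal (ε *
        (ν.real univ + (2 * ν.real univ + 1) * μ (closedBall 0 (∫ x, ψ x ∂ν + 2)))) := by
  set T := ν.real univ
  set K := μ (closedBall (0 : X) (∫ x, ψ x ∂ν + 2))
  have hZR : (fun g : α → X => ∫ x, g x ∂ν) '' G ⊆ closedBall 0 (∫ x, ψ x ∂ν) := by
    rintro _ ⟨g, hg, rfl⟩
    exact mem_closedBall_zero_iff.2 (norm_integral_le_of_norm_le hψ (hdom.mono fun x hx => hx g hg))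
  have hK : 0 ≤ K := by
    obtain ⟨g, hg⟩ := hG
    have hR := (norm_nonneg _).trans (mem_closedBall_zero_iff.1 (hZR ⟨g, hg, rfl⟩))
    exact hμ.nonneg _ (nonempty_closedBall.2 (by linarith)) isBounded_closedBall
  obtain ⟨𝓔, pt, hbdd, hweights, hmem, hsum⟩ :=
    exists_integral_mem_sum_smul_convexHull_add_closedBall hG hGint hψ hdom hJ_eq hJ_meas
      (fun x => μ ((fun g : α → X => g x) '' G)) hε
  set A := fun E => convexHull ℝ ((fun g : α → X => g (pt E)) '' G)
  have hA : ∀ E ∈ 𝓔, (A E).Nonempty ∧ IsBounded (A E) := fun E hE =>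
    ⟨(hG.image _).convexHull, isBounded_convexHull.2 (hbdd E hE)⟩
  have hZ := hμ.le_add_mul_of_subset_add_closedBall (hG.image _) hZR
    (IsBounded.finsetSum fun E hE => (hA E hE).2.smul₀ _) (by positivity) hε₁
    (by rintro _ ⟨g, hg, rfl⟩; exact hmem g hg)
  have hW : μ (∑ E ∈ 𝓔, ν.real E • A E) ≤
      ∑ E ∈ 𝓔, ν.real E * μ ((fun g : α → X => g (pt E)) '' G) :=
    (hcomb 𝓔 _ A (fun _ _ => measureReal_nonneg) hweights hA).trans_eq
      (Finset.sum_congr rfl fun E hE => by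
        rw [hμ.convexHull_inv _ (hG.image _) (hbdd E hE)])
  have hterm : ∀ E ∈ 𝓔, 0 ≤ ν.real E * μ ((fun g : α → X => g (pt E)) '' G) := fun E hE =>
    mul_nonneg measureReal_nonneg (hμ.nonneg _ (hG.image _) (hbdd E hE))
  calc ENNReal.ofReal (μ ((fun g : α → X => ∫ x, g x ∂ν) '' G))
      ≤ ENNReal.ofReal (∑ E ∈ 𝓔, ν.real E * μ ((fun g : α → X => g (pt E)) '' G))
        + ENNReal.ofReal ((2 * T + 1) * ε * K) :=
        (ENNReal.ofReal_le_ofReal (by linarith)).trans ENNReal.ofReal_add_le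
    _ ≤ ∫⁻ x, ENNReal.ofReal (μ ((fun g : α → X => g x) '' G)) ∂ν + ENNReal.ofReal (T * ε)
        + ENNReal.ofReal ((2 * T + 1) * ε * K) := by
        rw [ENNReal.ofReal_sum_of_nonneg hterm]
        gcongr
    _ = ∫⁻ x, ENNReal.ofReal (μ ((fun g : α → X => g x) '' G)) ∂ν
        + ENNReal.ofReal (ε * (T + (2 * T + 1) * K)) := by
        rw [add_assoc, ← ENNReal.ofReal_add (by positivity) (by positivity)]
        ring_nf

theorem IsConvexMNC.ofReal_le_lintegral_of_sum_smul_le {μ : Set X → ℝ}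
    (hμ : IsConvexMNC X μ) [Nonempty α] {G : Set (α → X)} (hG : G.Nonempty)
    (hGint : ∀ g ∈ G, Integrable g ν) {ψ : α → ℝ} (hψ : Integrable ψ ν)
    (hdom : ∀ᵐ x ∂ν, ∀ g ∈ G, ‖g x‖ ≤ ψ x)
    {J : α → BoundedContinuousFunction (DualUnitBall X) ℝ}
    (hJ_eq : ∀ᵐ x ∂ν, ∀ ω : DualUnitBall X,
      J x ω = ⨆ g : G, (ω : StrongDual ℝ X) ((g : α → X) x))
    (hJ_meas : AEStronglyMeasurable J ν)
    (hcomb : ∀ (𝓔 : Finset (Set α)) (c : Set α → ℝ) (A : Set α → Set X), (∀ E ∈ 𝓔, 0 ≤ c E) →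
      ∑ E ∈ 𝓔, c E ≤ ν.real univ → (∀ E ∈ 𝓔, (A E).Nonempty ∧ IsBounded (A E)) →
      μ (∑ E ∈ 𝓔, c E • A E) ≤ ∑ E ∈ 𝓔, c E * μ (A E)) :
    ENNReal.ofReal (μ ((fun g : α → X => ∫ x, g x ∂ν) '' G)) ≤
      ∫⁻ x, ENNReal.ofReal (μ ((fun g : α → X => g x) '' G)) ∂ν :=
  ENNReal.le_of_forall_pos_le_add_ofReal_mul (ε₀ := 1 / (2 * ν.real univ + 1)) (by positivity)
    fun ε hε hε₀ => hμ.ofReal_le_lintegral_add_of_sum_smul_le hG hGint hψ hdom hJ_eq hJ_meas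
      hcomb hε (by rwa [le_div_iff₀ (by positivity), mul_comm] at hε₀)

end Main

theorem convexMNC_integral_ineq'_general {X : Type*} [NormedAddCommGroup X] [NormedSpace ℝ X]
    [CompleteSpace X] (μ : Set X → ℝ) (hμ : IsConvexMNC X μ)
    (a : ℝ)
    (G : Set (ℝ → X)) (hGne : G.Nonempty)
    (hGint : ∀ g ∈ G, IntegrableOn g (Icc 0 a) volume)
    (ψ : ℝ → ℝ) (hψint : IntegrableOn ψ (Icc 0 a) volume)
    (hdom : ∀ᵐ t ∂(volume.restrict (Icc 0 a)), ∀ g ∈ G, ‖g t‖ ≤ ψ t)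
    (JG : ℝ → BoundedContinuousFunction (DualUnitBall X) ℝ)
    (hJG_eq : ∀ᵐ t ∂(volume.restrict (Icc 0 a)), ∀ ω : DualUnitBall X,
      JG t ω = ⨆ g : G, (ω : StrongDual ℝ X) ((g : ℝ → X) t))
    (hJG_meas : AEStronglyMeasurable JG (volume.restrict (Icc 0 a)))
    (t : ℝ)
    (hcase : (0 < t ∧ t ≤ min 1 a) ∨ (IsSublinearMNC X μ ∧ 0 < t ∧ t ≤ a)) :
    ENNReal.ofReal (μ ((fun g : ℝ → X => ∫ s in Ioc (0 : ℝ) t, g s) '' G)) ≤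
      ∫⁻ s in Ioc (0 : ℝ) t, ENNReal.ofReal (μ ((fun g : ℝ → X => g s) '' G)) := by
  obtain ⟨ht, hta⟩ : 0 < t ∧ t ≤ a := by
    rcases hcase with ⟨h₀, h₁⟩ | ⟨-, h₀, h₁⟩
    exacts [⟨h₀, h₁.trans (min_le_right _ _)⟩, ⟨h₀, h₁⟩]
  have hsub : Ioc 0 t ⊆ Icc 0 a := Ioc_subset_Icc_self.trans (Icc_subset_Icc_right hta)
  have hT : (volume.restrict (Ioc (0 : ℝ) t)).real univ = t := by simp [ht.le]
  refine hμ.ofReal_le_lintegral_of_sum_smul_le hGne (fun g hg => (hGint g hg).mono_set hsub)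
    (hψint.mono_set hsub) (ae_restrict_of_ae_restrict_of_subset hsub hdom)
    (ae_restrict_of_ae_restrict_of_subset hsub hJG_eq)
    (hJG_meas.mono_measure (Measure.restrict_mono hsub le_rfl)) fun 𝓔 c A hc hsum hA => ?_
  rcases hcase with ⟨-, ht₁⟩ | ⟨hμ', -⟩
  · exact hμ.map_sum_smul_le 𝓔 c A hc (hsum.trans (hT.trans_le (ht₁.trans (min_le_left _ _)))) hA
  · exact hμ'.map_sum_smul_le 𝓔 c A hc hA

/-- Basic integral inequality, second form: under the hypotheses of the first form,
`μ(∫₀ᵗ G(s) ds) ≤ ∫₀ᵗ μ(G(s)) ds` holds whenever either `0 < t ≤ min{1,a}`, or `μ` is a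
sublinear MNC and `0 < t ≤ a` (the right-hand side a Lebesgue integral in `[0,∞]`). -/
theorem convexMNC_integral_ineq' {X : Type*} [NormedAddCommGroup X] [NormedSpace ℝ X]
    [CompleteSpace X] (μ : Set X → ℝ) (hμ : IsConvexMNC X μ)
    (a : ℝ) (ha : 0 < a)
    (G : Set (ℝ → X)) (hGne : G.Nonempty)
    (hGint : ∀ g ∈ G, IntegrableOn g (Icc 0 a) volume)
    (ψ : ℝ → ℝ) (hψ0 : ∀ t, 0 ≤ ψ t) (hψint : IntegrableOn ψ (Icc 0 a) volume)
    (hdom : ∀ᵐ t ∂(volume.restrict (Icc 0 a)), ∀ g ∈ G, ‖g t‖ ≤ ψ t)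
    (JG : ℝ → BoundedContinuousFunction (DualUnitBall X) ℝ)
    (hJG_eq : ∀ᵐ t ∂(volume.restrict (Icc 0 a)), ∀ ω : DualUnitBall X,
      JG t ω = ⨆ g : G, (ω : StrongDual ℝ X) ((g : ℝ → X) t))
    (hJG_meas : AEStronglyMeasurable JG (volume.restrict (Icc 0 a)))
    (t : ℝ)
    (hcase : (0 < t ∧ t ≤ min 1 a) ∨ (IsSublinearMNC X μ ∧ 0 < t ∧ t ≤ a)) :
    ENNReal.ofReal (μ ((fun g : ℝ → X => ∫ s in Ioc (0 : ℝ) t, g s) '' G)) ≤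
      ∫⁻ s in Ioc (0 : ℝ) t, ENNReal.ofReal (μ ((fun g : ℝ → X => g s) '' G)) :=
  convexMNC_integral_ineq'_general μ hμ a G hGne hGint ψ hψint hdom JG hJG_eq hJG_meas t hcase
end

section
/- Let X be a real Banach space and I = [0,a]. Let G ⊆ C(I,X) be a nonempty equicontinuous family of continuous functions that is pointwise bounded (sup_{g∈G} ‖g(t)‖ < ∞ for every t ∈ I). Then the map 𝕁_G : I → C_b(Ω) is continuous; in particular it is strongly measurable. -/
open Set MeasureTheory

/-!
Functionals of norm at most one are 1-Lipschitz, and taking suprema of two bounded real families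
that are pointwise `ε`-close moves the supremum by at most `ε`. Hence
`‖𝕁_G(t) - 𝕁_G(t₀)‖ ≤ sup_{g ∈ G} ‖g t - g t₀‖`, which equicontinuity makes small. Strong
measurability follows because the continuous image of the compact interval is separable.
-/

section ciSup

variable {ι : Type*} [Nonempty ι]

lemma ciSup_le_ciSup_add {f h : ι → ℝ} (hh : BddAbove (range h)) {ε : ℝ}
    (hfh : ∀ i, f i ≤ h i + ε) : ⨆ i, f i ≤ (⨆ i, h i) + ε :=
  ciSup_le fun i => (hfh i).trans (add_le_add_left (le_ciSup hh i) ε)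

lemma abs_ciSup_sub_ciSup_le {f h : ι → ℝ} (hf : BddAbove (range f))
    (hh : BddAbove (range h)) {ε : ℝ} (hfh : ∀ i, |f i - h i| ≤ ε) :
    |(⨆ i, f i) - ⨆ i, h i| ≤ ε := by
  rw [abs_sub_le_iff, sub_le_iff_le_add', sub_le_iff_le_add']
  exact ⟨ciSup_le_ciSup_add hh fun i => by linarith [abs_le.1 (hfh i)],
    ciSup_le_ciSup_add hf fun i => by linarith [abs_le.1 (hfh i)]⟩

end ciSup

namespace DualUnitBall

variable {X : Type*} [NormedAddCommGroup X] [NormedSpace ℝ X]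

lemma norm_apply_le (φ : DualUnitBall X) (x : X) : ‖(φ : StrongDual ℝ X) x‖ ≤ ‖x‖ := by
  simpa using (φ : StrongDual ℝ X).le_of_opNorm_le (mem_closedBall_zero_iff.1 φ.2) x

lemma bddAbove_range_apply {ι : Type*} {x : ι → X} (hx : BddAbove (range fun i => ‖x i‖))
    (φ : DualUnitBall X) : BddAbove (range fun i => (φ : StrongDual ℝ X) (x i)) := by
  obtain ⟨M, hM⟩ := hx
  exact ⟨M, forall_mem_range.2 fun i =>
    (le_abs_self _).trans ((norm_apply_le φ (x i)).trans (hM (mem_range_self i)))⟩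

lemma dist_le_of_apply_eq_ciSup {ι : Type*} [Nonempty ι] {x y : ι → X}
    (hx : BddAbove (range fun i => ‖x i‖)) (hy : BddAbove (range fun i => ‖y i‖))
    {F₁ F₂ : BoundedContinuousFunction (DualUnitBall X) ℝ}
    (hF₁ : ∀ φ : DualUnitBall X, F₁ φ = ⨆ i, (φ : StrongDual ℝ X) (x i))
    (hF₂ : ∀ φ : DualUnitBall X, F₂ φ = ⨆ i, (φ : StrongDual ℝ X) (y i))
    {ε : ℝ} (hxy : ∀ i, ‖x i - y i‖ ≤ ε) : dist F₁ F₂ ≤ ε := by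
  have hε : 0 ≤ ε := (norm_nonneg _).trans (hxy (Classical.arbitrary ι))
  refine (BoundedContinuousFunction.dist_le hε).2 fun φ => ?_
  rw [Real.dist_eq, hF₁, hF₂]
  refine abs_ciSup_sub_ciSup_le (bddAbove_range_apply hx φ) (bddAbove_range_apply hy φ)
    fun i => ?_
  rw [← map_sub]
  exact (norm_apply_le φ _).trans (hxy i)

end DualUnitBall

theorem JG_continuous_of_equicontinuous_general {X : Type*} [NormedAddCommGroup X]
    [NormedSpace ℝ X] (a : ℝ)
    (G : Set (ℝ → X)) (hGne : G.Nonempty)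
    (hGequi : ∀ ε : ℝ, 0 < ε → ∀ t₀ ∈ Icc (0 : ℝ) a, ∃ δ : ℝ, 0 < δ ∧
      ∀ g ∈ G, ∀ t ∈ Icc (0 : ℝ) a, |t - t₀| < δ → ‖g t - g t₀‖ ≤ ε)
    (hGbdd : ∀ t ∈ Icc (0 : ℝ) a, ∃ M : ℝ, ∀ g ∈ G, ‖g t‖ ≤ M)
    (JG : ℝ → BoundedContinuousFunction (DualUnitBall X) ℝ)
    (hJG_eq : ∀ t ∈ Icc (0 : ℝ) a, ∀ ω : DualUnitBall X,
      JG t ω = ⨆ g : G, (ω : StrongDual ℝ X) ((g : ℝ → X) t)) :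
    ContinuousOn JG (Icc 0 a) ∧
      AEStronglyMeasurable JG (volume.restrict (Icc 0 a)) := by
  have : Nonempty G := hGne.to_subtype
  have hbdd : ∀ t ∈ Icc 0 a, BddAbove (range fun g : G => ‖(g : ℝ → X) t‖) := fun t ht =>
    let ⟨M, hM⟩ := hGbdd t ht
    ⟨M, forall_mem_range.2 fun g => hM g g.2⟩
  have hcont : ContinuousOn JG (Icc 0 a) := by
    intro t₀ ht₀
    refine Metric.continuousWithinAt_iff.2 fun ε hε => ?_
    obtain ⟨δ, hδ, hG⟩ := hGequi (ε / 2) (half_pos hε) t₀ ht₀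
    refine ⟨δ, hδ, fun t ht hdist => ?_⟩
    have := DualUnitBall.dist_le_of_apply_eq_ciSup (hbdd t ht) (hbdd t₀ ht₀)
      (hJG_eq t ht) (hJG_eq t₀ ht₀) fun g => hG g g.2 t ht hdist
    linarith
  exact ⟨hcont, hcont.aestronglyMeasurable measurableSet_Icc⟩

/-- If `G ⊆ C([0,a],X)` is a nonempty equicontinuous and pointwise bounded family, then
the map `𝕁_G : [0,a] → C_b(Ω)` (given by `𝕁_G(t)(x*) = sup_{g∈G} x*(g t)`) is continuous
on `[0,a]`; in particular it is strongly measurable. -/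
theorem JG_continuous_of_equicontinuous {X : Type*} [NormedAddCommGroup X]
    [NormedSpace ℝ X] [CompleteSpace X] (a : ℝ) (ha : 0 < a)
    (G : Set (ℝ → X)) (hGne : G.Nonempty)
    (hGcont : ∀ g ∈ G, ContinuousOn g (Icc 0 a))
    (hGequi : ∀ ε : ℝ, 0 < ε → ∀ t₀ ∈ Icc (0 : ℝ) a, ∃ δ : ℝ, 0 < δ ∧
      ∀ g ∈ G, ∀ t ∈ Icc (0 : ℝ) a, |t - t₀| < δ → ‖g t - g t₀‖ ≤ ε)
    (hGbdd : ∀ t ∈ Icc (0 : ℝ) a, ∃ M : ℝ, ∀ g ∈ G, ‖g t‖ ≤ M)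
    (JG : ℝ → BoundedContinuousFunction (DualUnitBall X) ℝ)
    (hJG_eq : ∀ t ∈ Icc (0 : ℝ) a, ∀ ω : DualUnitBall X,
      JG t ω = ⨆ g : G, (ω : StrongDual ℝ X) ((g : ℝ → X) t)) :
    ContinuousOn JG (Icc 0 a) ∧
      AEStronglyMeasurable JG (volume.restrict (Icc 0 a)) :=
  JG_continuous_of_equicontinuous_general a G hGne hGequi hGbdd JG hJG_eq
end

section
/- Let X be a real Banach space, μ a convex MNC on X, I = [0,a] with a > 0, and G ⊆ C(I,X) a nonempty equicontinuous family that is uniformly bounded (sup_{g∈G, t∈I} ‖g(t)‖ < ∞). Then μ(∫₀ᵗ G(s) ds) ≤ (1/t) ∫₀ᵗ μ(t·G(s)) ds for every 0 < t ≤ a. Moreover, μ(∫₀ᵗ G(s) ds) ≤ ∫₀ᵗ μ(G(s)) ds whenever either (i) 0 < t ≤ min{1,a}, or (ii) μ is a sublinear MNC and 0 < t ≤ a. -/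
open Set MeasureTheory Bornology Pointwise

/-!
The integral `∫₀ᵗ g` is approximated, uniformly in `g ∈ G`, by the right-endpoint Riemann sums
`∑ (t/n) • g(sᵢ)`: equicontinuity on the compact interval `[0, t]` gives one mesh that works for
every `g`. These sums lie in `∑ n⁻¹ • (t • G(sᵢ))`, whose measure is at most the average of the
`μ(t • G(sᵢ))` by convexity, and that average is again a Riemann sum, now of the continuous
function `s ↦ μ(t • G(s))`. Convexity also shows that moving a set by at most `r ≤ 1` changes
`μ` by at most `r · μ(ball)`, so both approximation errors vanish as the mesh goes to zero.
The second inequality follows from `μ(t • B) ≤ t μ(B)`: convexity against `{0}` when `t ≤ 1`,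
homogeneity in the sublinear case.
-/

open Filter Topology Metric

theorem exists_mem_Ioc_mul_lt (K : ℝ) {ε : ℝ} (hε : 0 < ε) : ∃ r ∈ Ioc (0 : ℝ) 1, r * K < ε := by
  have hlim : Tendsto (fun r : ℝ => r * K) (𝓝[>] 0) (𝓝 0) := by
    simpa using ((continuous_mul_const K).tendsto 0).mono_left nhdsWithin_le_nhds
  have hsmall : ∀ᶠ r in 𝓝[>] (0 : ℝ), r ∈ Ioc 0 1 := Ioc_mem_nhdsGT one_pos
  exact (hsmall.and (hlim.eventually (gt_mem_nhds hε))).exists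

theorem inv_ofReal_mul_lintegral_le {α : Type*} [MeasurableSpace α] {ν : Measure α}
    {f g : α → ℝ} {c : ℝ} (hc : 0 < c) (h : ∀ᵐ x ∂ν, f x ≤ c * g x) :
    (ENNReal.ofReal c)⁻¹ * ∫⁻ x, ENNReal.ofReal (f x) ∂ν ≤ ∫⁻ x, ENNReal.ofReal (g x) ∂ν := by
  rw [ENNReal.inv_mul_le_iff (ENNReal.ofReal_pos.2 hc).ne' ENNReal.ofReal_ne_top,
    ← lintegral_const_mul' _ _ ENNReal.ofReal_ne_top]
  refine lintegral_mono_ae (h.mono fun x hx => ?_)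
  rw [← ENNReal.ofReal_mul hc.le]
  exact ENNReal.ofReal_le_ofReal hx

section Equicontinuity

variable {ι β α : Type*}

theorem Metric.equicontinuousOn_iff [PseudoMetricSpace β] [PseudoMetricSpace α]
    {F : ι → β → α} {S : Set β} :
    EquicontinuousOn F S ↔
      ∀ x₀ ∈ S, ∀ ε > 0, ∃ δ > 0, ∀ x ∈ S, dist x x₀ < δ → ∀ i, dist (F i x₀) (F i x) < ε := by
  simp [← equicontinuous_restrict_iff, Equicontinuous, Metric.equicontinuousAt_iff,
    Subtype.dist_eq]

theorem Metric.uniformEquicontinuousOn_iff [PseudoMetricSpace β] [PseudoMetricSpace α]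
    {F : ι → β → α} {S : Set β} :
    UniformEquicontinuousOn F S ↔
      ∀ ε > 0, ∃ δ > 0, ∀ x ∈ S, ∀ y ∈ S, dist x y < δ → ∀ i, dist (F i x) (F i y) < ε := by
  simp [← uniformEquicontinuous_restrict_iff, Metric.uniformEquicontinuous_iff, Subtype.dist_eq]

theorem IsCompact.uniformEquicontinuousOn_of_equicontinuousOn [UniformSpace β] [UniformSpace α]
    {F : ι → β → α} {S : Set β} (hS : IsCompact S) (hF : EquicontinuousOn F S) :
    UniformEquicontinuousOn F S := by
  have := isCompact_iff_compactSpace.mp hS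
  rw [← uniformEquicontinuous_restrict_iff]
  exact CompactSpace.uniformEquicontinuous_of_equicontinuous ((equicontinuous_restrict_iff F).2 hF)

end Equicontinuity

section RiemannSum

variable {E : Type*}

theorem natCast_mul_div_mem_Icc {t : ℝ} {k n : ℕ} (ht : 0 ≤ t) (hk : k ≤ n) :
    (k : ℝ) * (t / n) ∈ Icc 0 t := by
  refine ⟨by positivity, ?_⟩
  rcases Nat.eq_zero_or_pos n with rfl | hn
  · simpa using ht
  · calc (k : ℝ) * (t / n) ≤ n * (t / n) := by gcongr
      _ = t := mul_div_cancel₀ t (by positivity)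

noncomputable def riemannSum [AddCommMonoid E] [Module ℝ E] (f : ℝ → E) (t : ℝ) (n : ℕ) : E :=
  ∑ i ∈ Finset.range n, (t / n) • f (((i + 1 : ℕ) : ℝ) * (t / n))

theorem norm_intervalIntegral_sub_riemannSum_le [NormedAddCommGroup E] [NormedSpace ℝ E]
    [CompleteSpace E] {f : ℝ → E} {t ε : ℝ} {n : ℕ} (ht : 0 ≤ t) (hn : 0 < n)
    (hf : IntervalIntegrable f volume 0 t)
    (hε : ∀ x ∈ Icc 0 t, ∀ y ∈ Icc 0 t, |x - y| ≤ t / n → ‖f x - f y‖ ≤ ε) :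
    ‖(∫ x in 0..t, f x) - riemannSum f t n‖ ≤ t * ε := by
  set p : ℕ → ℝ := fun k => k * (t / n)
  have hstep : ∀ k, p (k + 1) - p k = t / n := fun k => by simp only [p]; push_cast; ring
  have hmono : ∀ k, p k ≤ p (k + 1) := fun k => by
    linarith [hstep k, div_nonneg ht (Nat.cast_nonneg n)]
  have hpiece : ∀ k < n, Icc (p k) (p (k + 1)) ⊆ Icc 0 t := fun k hk =>
    Icc_subset_Icc (natCast_mul_div_mem_Icc ht hk.le).1 (natCast_mul_div_mem_Icc ht hk).2
  have hint : ∀ k < n, IntervalIntegrable f volume (p k) (p (k + 1)) := fun k hk =>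
    hf.mono_set (by rw [uIcc_of_le ht, uIcc_of_le (hmono k)]; exact hpiece k hk)
  have hterm : ∀ k < n,
      ‖(∫ x in p k..p (k + 1), f x) - (t / n) • f (p (k + 1))‖ ≤ ε * (t / n) := fun k hk => by
    rw [← hstep k, ← intervalIntegral.integral_const,
      ← intervalIntegral.integral_sub (hint k hk) intervalIntegrable_const]
    refine (intervalIntegral.norm_integral_le_of_norm_le_const fun x hx => ?_).trans_eq
      (by rw [abs_of_nonneg (sub_nonneg.2 (hmono k))])
    rw [uIoc_of_le (hmono k)] at hx
    refine hε x (hpiece k hk (Ioc_subset_Icc_self hx)) _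
      (hpiece k hk (right_mem_Icc.2 (hmono k))) ?_
    rw [abs_sub_comm, abs_of_nonneg (by linarith [hx.2]), ← hstep k]
    linarith [hx.1]
  have hsplit : (∫ x in 0..t, f x) = ∑ k ∈ Finset.range n, ∫ x in p k..p (k + 1), f x := by
    rw [intervalIntegral.sum_integral_adjacent_intervals hint]
    simp only [p]
    congr 1
    · simp
    · field_simp
  calc ‖(∫ x in 0..t, f x) - riemannSum f t n‖
      = ‖∑ k ∈ Finset.range n, ((∫ x in p k..p (k + 1), f x) - (t / n) • f (p (k + 1)))‖ := by
        rw [hsplit, riemannSum, Finset.sum_sub_distrib]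
    _ ≤ ∑ k ∈ Finset.range n, ε * (t / n) :=
        (norm_sum_le _ _).trans (Finset.sum_le_sum fun k hk => hterm k (by simpa using hk))
    _ = t * ε := by simp; field_simp

end RiemannSum

section ConvexMNC

variable {X : Type*} [NormedAddCommGroup X] [NormedSpace ℝ X] {μ : Set X → ℝ}

theorem IsConvexMNC.smul_le_mul_of_le_one (hμ : IsConvexMNC X μ) {B : Set X} (hB : B.Nonempty)
    (hB' : IsBounded B) {t : ℝ} (ht₀ : 0 ≤ t) (ht₁ : t ≤ 1) : μ (t • B) ≤ t * μ B := by
  have h0 : μ {0} = 0 :=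
    (hμ.eq_zero_iff _ (singleton_nonempty 0) isBounded_singleton).2 (by simp)
  simpa [h0] using hμ.convex B {0} hB (singleton_nonempty 0) hB' isBounded_singleton t ht₀ ht₁

/-- Writing `x + e = (1 - r) • x + r • (x + r⁻¹ • e)` puts `B` inside a convex combination of `A`
and a ball, so convexity bounds the effect of an `r`-perturbation linearly in `r`. -/
theorem IsConvexMNC.le_add_mul_of_subset_add_closedBall_s12 (hμ : IsConvexMNC X μ) {A B : Set X}
    {R r : ℝ} (hA : A.Nonempty) (hB : B.Nonempty) (hAR : A ⊆ closedBall 0 R) (hr₀ : 0 < r)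
    (hr₁ : r ≤ 1) (hBA : B ⊆ A + closedBall 0 r) :
    μ B ≤ μ A + r * μ (closedBall 0 (R + 1)) := by
  have hR : 0 ≤ R := by
    obtain ⟨x, hx⟩ := hA
    exact (norm_nonneg x).trans (mem_closedBall_zero_iff.1 (hAR hx))
  have hA' : IsBounded A := isBounded_closedBall.subset hAR
  have hsub : B ⊆ (1 - r) • A + r • closedBall 0 (R + 1) := by
    rintro _ hb
    obtain ⟨x, hx, e, he, rfl⟩ := hBA hb
    have hx' := mem_closedBall_zero_iff.1 (hAR hx)
    have he' := mem_closedBall_zero_iff.1 he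
    refine ⟨(1 - r) • x, smul_mem_smul_set hx, r • (x + r⁻¹ • e), smul_mem_smul_set ?_, ?_⟩
    · rw [mem_closedBall_zero_iff]
      calc ‖x + r⁻¹ • e‖ ≤ ‖x‖ + r⁻¹ * ‖e‖ := by
            simpa [norm_smul, abs_of_pos hr₀] using norm_add_le x (r⁻¹ • e)
        _ ≤ R + r⁻¹ * r := by gcongr
        _ = R + 1 := by rw [inv_mul_cancel₀ hr₀.ne']
    · simp only [smul_add, smul_smul, mul_inv_cancel₀ hr₀.ne', one_smul]
      module
  have hball : (closedBall (0 : X) (R + 1)).Nonempty := nonempty_closedBall.2 (by linarith)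
  have hconv := hμ.convex _ _ hA hball hA' isBounded_closedBall (1 - r) (by linarith) (by linarith)
  rw [sub_sub_cancel] at hconv
  calc μ B ≤ μ ((1 - r) • A + r • closedBall 0 (R + 1)) :=
        hμ.mono _ _ hB ((hA'.smul₀ _).add (isBounded_closedBall.smul₀ _)) hsub
    _ ≤ (1 - r) * μ A + r * μ (closedBall 0 (R + 1)) := hconv
    _ ≤ μ A + r * μ (closedBall 0 (R + 1)) := by
        nlinarith [hμ.nonneg A hA hA']

theorem IsConvexMNC.sum_inv_smul_le (hμ : IsConvexMNC X μ) {A : ℕ → Set X} {n : ℕ} (hn : 0 < n)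
    (hA : ∀ i < n, (A i).Nonempty) (hA' : ∀ i < n, IsBounded (A i)) :
    μ (∑ i ∈ Finset.range n, (n : ℝ)⁻¹ • A i) ≤ (n : ℝ)⁻¹ * ∑ i ∈ Finset.range n, μ (A i) := by
  induction n, hn using Nat.le_induction with
  | base => simp
  | succ n hn ih =>
    have hn' : (0 : ℝ) < n := by exact_mod_cast hn
    set l : ℝ := n / (n + 1)
    have hl : 1 - l = ((n : ℝ) + 1)⁻¹ := by simp only [l]; field_simp; ring
    have hln : l * (n : ℝ)⁻¹ = ((n : ℝ) + 1)⁻¹ := by simp only [l]; field_simp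
    have hsplit : ∑ i ∈ Finset.range (n + 1), ((n + 1 : ℕ) : ℝ)⁻¹ • A i
        = l • ∑ i ∈ Finset.range n, (n : ℝ)⁻¹ • A i + (1 - l) • A n := by
      rw [Finset.sum_range_succ, Finset.smul_sum, hl]
      simp only [smul_smul, hln, Nat.cast_succ]
    have hne : (∑ i ∈ Finset.range n, (n : ℝ)⁻¹ • A i).Nonempty :=
      Finset.sum_induction _ Set.Nonempty (fun _ _ => Nonempty.add) zero_nonempty
        fun i hi => (hA i (by simp at hi; omega)).smul_set
    have hbdd : IsBounded (∑ i ∈ Finset.range n, (n : ℝ)⁻¹ • A i) :=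
      Finset.sum_induction _ IsBounded (fun _ _ => IsBounded.add) isBounded_singleton
        fun i hi => (hA' i (by simp at hi; omega)).smul₀ _
    have hconv := hμ.convex _ _ hne (hA n n.lt_succ_self) hbdd (hA' n n.lt_succ_self) l
      (by positivity) (div_le_one_of_le₀ (by linarith) (by positivity))
    have hih := ih (fun i hi => hA i (by omega)) (fun i hi => hA' i (by omega))
    rw [hsplit]
    refine hconv.trans ?_
    rw [Finset.sum_range_succ, hl, Nat.cast_succ]
    calc l * μ (∑ i ∈ Finset.range n, (n : ℝ)⁻¹ • A i) + ((n : ℝ) + 1)⁻¹ * μ (A n)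
        ≤ l * ((n : ℝ)⁻¹ * ∑ i ∈ Finset.range n, μ (A i)) + ((n : ℝ) + 1)⁻¹ * μ (A n) := by
          gcongr
      _ = ((n : ℝ) + 1)⁻¹ * (∑ i ∈ Finset.range n, μ (A i) + μ (A n)) := by
          rw [← mul_assoc, hln, mul_add]

end ConvexMNC

section Family

variable {X : Type*} [NormedAddCommGroup X] [NormedSpace ℝ X] {μ : Set X → ℝ} {G : Set (ℝ → X)}

theorem sum_inv_smul_subset_closedBall {A : ℕ → Set X} {n : ℕ} {R : ℝ} (hn : 0 < n)
    (hA : ∀ i < n, A i ⊆ closedBall 0 R) :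
    ∑ i ∈ Finset.range n, (n : ℝ)⁻¹ • A i ⊆ closedBall 0 R := by
  intro x hx
  obtain ⟨v, hv, rfl⟩ := (mem_finsetSum _ _ _).1 hx
  rw [mem_closedBall_zero_iff]
  calc ‖∑ i ∈ Finset.range n, v i‖ ≤ ∑ _i ∈ Finset.range n, (n : ℝ)⁻¹ * R := by
        refine (norm_sum_le _ _).trans (Finset.sum_le_sum fun i hi => ?_)
        obtain ⟨a, ha, hav⟩ := hv hi
        rw [← hav, norm_smul, Real.norm_of_nonneg (by positivity)]
        gcongr
        exact mem_closedBall_zero_iff.1 (hA i (Finset.mem_range.1 hi) ha)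
    _ = R := by simp; field_simp

theorem smul_image_eval_subset_closedBall {s t M : ℝ} (ht : 0 ≤ t) (hM : ∀ g ∈ G, ‖g s‖ ≤ M) :
    t • ((fun g : ℝ → X => g s) '' G) ⊆ closedBall 0 (t * M) := by
  rintro _ ⟨_, ⟨g, hg, rfl⟩, rfl⟩
  rw [mem_closedBall_zero_iff, norm_smul, Real.norm_of_nonneg ht]
  exact mul_le_mul_of_nonneg_left (hM g hg) ht

theorem smul_image_eval_subset_add_closedBall {x y t η : ℝ} (ht : 0 ≤ t)
    (h : ∀ g ∈ G, ‖g y - g x‖ ≤ η) :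
    t • ((fun g : ℝ → X => g y) '' G) ⊆
      t • ((fun g : ℝ → X => g x) '' G) + closedBall 0 (t * η) := by
  rintro _ ⟨_, ⟨g, hg, rfl⟩, rfl⟩
  refine ⟨t • g x, smul_mem_smul_set (mem_image_of_mem _ hg), t • (g y - g x), ?_, by
    simp [smul_sub]⟩
  rw [mem_closedBall_zero_iff, norm_smul, Real.norm_of_nonneg ht]
  exact mul_le_mul_of_nonneg_left (h g hg) ht

theorem IsConvexMNC.abs_sub_smul_image_eval_le (hμ : IsConvexMNC X μ) (hG : G.Nonempty)
    {x y t r M : ℝ} (ht : 0 < t) (hr : r ∈ Ioc 0 1) (hMx : ∀ g ∈ G, ‖g x‖ ≤ M)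
    (hMy : ∀ g ∈ G, ‖g y‖ ≤ M) (h : ∀ g ∈ G, ‖g x - g y‖ ≤ r / t) :
    |μ (t • ((fun g : ℝ → X => g x) '' G)) - μ (t • ((fun g : ℝ → X => g y) '' G))| ≤
      r * μ (closedBall 0 (t * M + 1)) := by
  have hne : ∀ s, (t • ((fun g : ℝ → X => g s) '' G)).Nonempty := fun s =>
    (hG.image _).smul_set
  have htr : t * (r / t) = r := mul_div_cancel₀ r ht.ne'
  have hxy := smul_image_eval_subset_add_closedBall ht.le h
  have hyx := smul_image_eval_subset_add_closedBall ht.le fun g hg =>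
    (norm_sub_rev _ _).trans_le (h g hg)
  rw [htr] at hxy hyx
  rw [abs_sub_le_iff]
  constructor
  · linarith [hμ.le_add_mul_of_subset_add_closedBall_s12 (hne y) (hne x)
      (smul_image_eval_subset_closedBall ht.le hMy) hr.1 hr.2 hxy]
  · linarith [hμ.le_add_mul_of_subset_add_closedBall_s12 (hne x) (hne y)
      (smul_image_eval_subset_closedBall ht.le hMx) hr.1 hr.2 hyx]

theorem IsConvexMNC.continuousOn_smul_image_eval (hμ : IsConvexMNC X μ) (hG : G.Nonempty)
    {S : Set ℝ} {t M : ℝ} (ht : 0 < t) (hGe : EquicontinuousOn ((↑) : G → ℝ → X) S)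
    (hM : ∀ g ∈ G, ∀ s ∈ S, ‖g s‖ ≤ M) :
    ContinuousOn (fun s => μ (t • ((fun g : ℝ → X => g s) '' G))) S := by
  rw [Metric.continuousOn_iff]
  intro s₀ hs₀ ε hε
  obtain ⟨r, hr, hrε⟩ := exists_mem_Ioc_mul_lt (μ (closedBall 0 (t * M + 1))) hε
  obtain ⟨δ, hδ, hδG⟩ := Metric.equicontinuousOn_iff.1 hGe s₀ hs₀ (r / t) (div_pos hr.1 ht)
  refine ⟨δ, hδ, fun s hs hss₀ => lt_of_le_of_lt ?_ hrε⟩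
  refine hμ.abs_sub_smul_image_eval_le hG ht hr (hM · · s hs) (hM · · s₀ hs₀) fun g hg => ?_
  rw [← dist_eq_norm, dist_comm]
  exact (hδG s hs hss₀ ⟨g, hg⟩).le

end Family

section Integral

variable {X : Type*} [NormedAddCommGroup X] [NormedSpace ℝ X] [CompleteSpace X] {μ : Set X → ℝ}
  {G : Set (ℝ → X)}

theorem image_intervalIntegral_subset_add_closedBall {t r : ℝ} {n : ℕ} (ht : 0 < t) (hn : 0 < n)
    (hGint : ∀ g ∈ G, IntervalIntegrable g volume 0 t)
    (hmod : ∀ g ∈ G, ∀ x ∈ Icc 0 t, ∀ y ∈ Icc 0 t, |x - y| ≤ t / n → ‖g x - g y‖ ≤ r / t) :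
    (fun g : ℝ → X => ∫ s in 0..t, g s) '' G ⊆
      ∑ i ∈ Finset.range n,
        (n : ℝ)⁻¹ • t • ((fun g : ℝ → X => g (((i + 1 : ℕ) : ℝ) * (t / n))) '' G) +
      closedBall 0 r := by
  rintro _ ⟨g, hg, rfl⟩
  refine ⟨riemannSum g t n, finsetSum_mem_finsetSum _ _ _ fun i _ => ?_, _, ?_,
    add_sub_cancel _ _⟩
  · rw [show (t / n) • g (((i + 1 : ℕ) : ℝ) * (t / n)) =
        (n : ℝ)⁻¹ • t • g (((i + 1 : ℕ) : ℝ) * (t / n)) by rw [smul_smul, inv_mul_eq_div]]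
    exact smul_mem_smul_set (smul_mem_smul_set (mem_image_of_mem _ hg))
  · rw [mem_closedBall_zero_iff, ← mul_div_cancel₀ r ht.ne']
    exact norm_intervalIntegral_sub_riemannSum_le ht.le hn (hGint g hg) (hmod g hg)

theorem IsConvexMNC.image_intervalIntegral_le_add (hμ : IsConvexMNC X μ) (hG : G.Nonempty)
    {t r M : ℝ} {n : ℕ} (ht : 0 < t) (hn : 0 < n) (hr : r ∈ Ioc 0 1)
    (hGint : ∀ g ∈ G, IntervalIntegrable g volume 0 t)
    (hφint : IntervalIntegrable (fun s => μ (t • ((fun g : ℝ → X => g s) '' G))) volume 0 t)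
    (hmod : ∀ g ∈ G, ∀ x ∈ Icc 0 t, ∀ y ∈ Icc 0 t, |x - y| ≤ t / n → ‖g x - g y‖ ≤ r / t)
    (hM : ∀ g ∈ G, ∀ s ∈ Icc 0 t, ‖g s‖ ≤ M) :
    μ ((fun g : ℝ → X => ∫ s in 0..t, g s) '' G) ≤
      t⁻¹ * (∫ s in 0..t, μ (t • ((fun g : ℝ → X => g s) '' G))) +
        r * (2 * μ (closedBall 0 (t * M + 1))) := by
  set φ := fun s => μ (t • ((fun g : ℝ → X => g s) '' G))
  set C := μ (closedBall (0 : X) (t * M + 1))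
  set A : ℕ → Set X := fun i => t • ((fun g : ℝ → X => g (((i + 1 : ℕ) : ℝ) * (t / n))) '' G)
  have hA : ∀ i < n, A i ⊆ closedBall 0 (t * M) := fun i hi =>
    smul_image_eval_subset_closedBall ht.le fun g hg => hM g hg _ (natCast_mul_div_mem_Icc ht.le hi)
  have hsub := image_intervalIntegral_subset_add_closedBall ht hn hGint hmod
  have hφR : riemannSum φ t n ≤ (∫ s in 0..t, φ s) + t * (r * C) := by
    have := norm_intervalIntegral_sub_riemannSum_le ht.le hn hφint fun x hx y hy hxy =>
      hμ.abs_sub_smul_image_eval_le hG ht hr (hM · · x hx) (hM · · y hy) (hmod · · x hx y hy hxy)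
    rw [Real.norm_eq_abs, abs_le] at this
    linarith [this.1]
  have hAne : ∀ i, (A i).Nonempty := fun i => (hG.image _).smul_set
  have hQne : (∑ i ∈ Finset.range n, (n : ℝ)⁻¹ • A i).Nonempty :=
    ⟨_, finsetSum_mem_finsetSum _ _ _ fun i _ => smul_mem_smul_set (hAne i).some_mem⟩
  calc μ ((fun g : ℝ → X => ∫ s in 0..t, g s) '' G)
      ≤ μ (∑ i ∈ Finset.range n, (n : ℝ)⁻¹ • A i) + r * C :=
        hμ.le_add_mul_of_subset_add_closedBall_s12 hQne (hG.image _)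
          (sum_inv_smul_subset_closedBall hn hA) hr.1 hr.2 hsub
    _ ≤ (n : ℝ)⁻¹ * ∑ i ∈ Finset.range n, μ (A i) + r * C := by
        gcongr
        exact hμ.sum_inv_smul_le hn (fun i _ => hAne i) fun i hi =>
          isBounded_closedBall.subset (hA i hi)
    _ = t⁻¹ * riemannSum φ t n + r * C := by
        simp only [riemannSum, smul_eq_mul, Finset.mul_sum, A, φ]
        congr 1
        refine Finset.sum_congr rfl fun i _ => ?_
        field_simp
    _ ≤ t⁻¹ * ((∫ s in 0..t, φ s) + t * (r * C)) + r * C := by gcongr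
    _ = t⁻¹ * (∫ s in 0..t, φ s) + r * (2 * C) := by field_simp; ring

theorem IsConvexMNC.image_intervalIntegral_le (hμ : IsConvexMNC X μ) (hG : G.Nonempty) {t M : ℝ}
    (ht : 0 < t) (hGe : EquicontinuousOn ((↑) : G → ℝ → X) (Icc 0 t))
    (hM : ∀ g ∈ G, ∀ s ∈ Icc 0 t, ‖g s‖ ≤ M) :
    μ ((fun g : ℝ → X => ∫ s in 0..t, g s) '' G) ≤
      t⁻¹ * ∫ s in 0..t, μ (t • ((fun g : ℝ → X => g s) '' G)) := by
  have hGint : ∀ g ∈ G, IntervalIntegrable g volume 0 t := fun g hg =>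
    (hGe.continuousOn ⟨g, hg⟩).intervalIntegrable_of_Icc (μ := volume) ht.le
  have hφint := (hμ.continuousOn_smul_image_eval hG ht hGe hM).intervalIntegrable_of_Icc (μ := volume) ht.le
  refine le_of_forall_pos_lt_add fun ε hε => ?_
  obtain ⟨r, hr, hrε⟩ := exists_mem_Ioc_mul_lt (2 * μ (closedBall 0 (t * M + 1))) hε
  obtain ⟨δ, hδ, hδG⟩ := Metric.uniformEquicontinuousOn_iff.1
    (isCompact_Icc.uniformEquicontinuousOn_of_equicontinuousOn hGe) (r / t) (div_pos hr.1 ht)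
  obtain ⟨n, hn⟩ := exists_nat_gt (t / δ)
  have hn' : (0 : ℝ) < n := (div_pos ht hδ).trans hn
  have htn : t / n < δ := by rwa [div_lt_iff₀ hn', ← div_lt_iff₀' hδ]
  refine (hμ.image_intervalIntegral_le_add hG ht (by exact_mod_cast hn') hr hGint hφint
    (fun g hg x hx y hy hxy => ?_) hM).trans_lt (by linarith)
  rw [← dist_eq_norm]
  exact (hδG x hx y hy (by rw [Real.dist_eq]; linarith) ⟨g, hg⟩).le

theorem IsConvexMNC.ofReal_image_setIntegral_le (hμ : IsConvexMNC X μ) (hG : G.Nonempty)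
    {t M : ℝ} (ht : 0 < t) (hGe : EquicontinuousOn ((↑) : G → ℝ → X) (Icc 0 t))
    (hM : ∀ g ∈ G, ∀ s ∈ Icc 0 t, ‖g s‖ ≤ M) :
    ENNReal.ofReal (μ ((fun g : ℝ → X => ∫ s in Ioc (0 : ℝ) t, g s) '' G)) ≤
      (ENNReal.ofReal t)⁻¹ *
        ∫⁻ s in Ioc (0 : ℝ) t, ENNReal.ofReal (μ (t • ((fun g : ℝ → X => g s) '' G))) := by
  have hφint : IntegrableOn (fun s => μ (t • ((fun g : ℝ → X => g s) '' G))) (Ioc 0 t) :=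
    (hμ.continuousOn_smul_image_eval hG ht hGe hM).integrableOn_Icc.mono_set Ioc_subset_Icc_self
  have hφnonneg : ∀ᵐ s ∂volume.restrict (Ioc (0 : ℝ) t),
      0 ≤ μ (t • ((fun g : ℝ → X => g s) '' G)) := by
    filter_upwards [ae_restrict_mem measurableSet_Ioc] with s hs
    have hsub := smul_image_eval_subset_closedBall ht.le (hM · · s (Ioc_subset_Icc_self hs))
    exact hμ.nonneg _ (hG.image _).smul_set (isBounded_closedBall.subset hsub)
  have h := hμ.image_intervalIntegral_le hG ht hGe hM
  simp only [intervalIntegral.integral_of_le ht.le] at h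
  rw [← ofReal_integral_eq_lintegral_ofReal hφint hφnonneg, ← ENNReal.ofReal_inv_of_pos ht,
    ← ENNReal.ofReal_mul (inv_nonneg.2 ht.le)]
  exact ENNReal.ofReal_le_ofReal h

end Integral

theorem convexMNC_integral_ineq_of_equicontinuous_general {X : Type*} [NormedAddCommGroup X]
    [NormedSpace ℝ X] [CompleteSpace X] (μ : Set X → ℝ) (hμ : IsConvexMNC X μ)
    (a : ℝ)
    (G : Set (ℝ → X)) (hGne : G.Nonempty)
    (hGequi : ∀ ε : ℝ, 0 < ε → ∀ t₀ ∈ Icc (0 : ℝ) a, ∃ δ : ℝ, 0 < δ ∧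
      ∀ g ∈ G, ∀ t ∈ Icc (0 : ℝ) a, |t - t₀| < δ → ‖g t - g t₀‖ ≤ ε)
    (hGbdd : ∃ M : ℝ, ∀ g ∈ G, ∀ t ∈ Icc (0 : ℝ) a, ‖g t‖ ≤ M) :
    (∀ t : ℝ, 0 < t → t ≤ a →
      ENNReal.ofReal (μ ((fun g : ℝ → X => ∫ s in Ioc (0 : ℝ) t, g s) '' G)) ≤
        (ENNReal.ofReal t)⁻¹ *
          ∫⁻ s in Ioc (0 : ℝ) t,
            ENNReal.ofReal (μ (t • ((fun g : ℝ → X => g s) '' G)))) ∧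
    (∀ t : ℝ, (0 < t ∧ t ≤ min 1 a) ∨ (IsSublinearMNC X μ ∧ 0 < t ∧ t ≤ a) →
      ENNReal.ofReal (μ ((fun g : ℝ → X => ∫ s in Ioc (0 : ℝ) t, g s) '' G)) ≤
        ∫⁻ s in Ioc (0 : ℝ) t, ENNReal.ofReal (μ ((fun g : ℝ → X => g s) '' G))) := by
  obtain ⟨M, hM⟩ := hGbdd
  have hGe : EquicontinuousOn ((↑) : G → ℝ → X) (Icc 0 a) :=
    Metric.equicontinuousOn_iff.2 fun t₀ ht₀ ε hε => by
      obtain ⟨δ, hδ, h⟩ := hGequi (ε / 2) (half_pos hε) t₀ ht₀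
      refine ⟨δ, hδ, fun t ht htt₀ g => ?_⟩
      rw [dist_comm, dist_eq_norm]
      exact (h g g.2 t ht (by rwa [← Real.dist_eq])).trans_lt (half_lt_self hε)
  have hbdd : ∀ s ∈ Icc 0 a, IsBounded ((fun g : ℝ → X => g s) '' G) := fun s hs =>
    isBounded_iff_forall_norm_le.2 ⟨M, by rintro _ ⟨g, hg, rfl⟩; exact hM g hg s hs⟩
  have part₁ : ∀ t : ℝ, 0 < t → t ≤ a → _ := fun t ht hta =>
    hμ.ofReal_image_setIntegral_le hGne ht (hGe.mono (Icc_subset_Icc_right hta))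
      fun g hg s hs => hM g hg s (Icc_subset_Icc_right hta hs)
  refine ⟨part₁, fun t ht => ?_⟩
  obtain ⟨ht₀, hta, hsmul⟩ : 0 < t ∧ t ≤ a ∧ ∀ s ∈ Icc 0 a,
      μ (t • ((fun g : ℝ → X => g s) '' G)) ≤ t * μ ((fun g : ℝ → X => g s) '' G) := by
    rcases ht with ⟨ht₀, ht⟩ | ⟨hsub, ht₀, hta⟩
    · exact ⟨ht₀, ht.trans (min_le_right _ _), fun s hs => hμ.smul_le_mul_of_le_one
        (hGne.image _) (hbdd s hs) ht₀.le (ht.trans (min_le_left _ _))⟩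
    · exact ⟨ht₀, hta, fun s hs => (hsub.smul_eq _ (hGne.image _) (hbdd s hs) t ht₀.le).le⟩
  refine (part₁ t ht₀ hta).trans (inv_ofReal_mul_lintegral_le ht₀ ?_)
  filter_upwards [ae_restrict_mem measurableSet_Ioc] with s hs
  exact hsmul s ⟨hs.1.le, hs.2.trans hta⟩

/-- Integral inequalities for a convex MNC over a nonempty equicontinuous, uniformly
bounded family `G ⊆ C([0,a],X)`:
`μ(∫₀ᵗ G(s) ds) ≤ (1/t)∫₀ᵗ μ(t•G(s)) ds` for all `0 < t ≤ a`, and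
`μ(∫₀ᵗ G(s) ds) ≤ ∫₀ᵗ μ(G(s)) ds` whenever `0 < t ≤ min{1,a}` or `μ` is sublinear. -/
theorem convexMNC_integral_ineq_of_equicontinuous {X : Type*} [NormedAddCommGroup X]
    [NormedSpace ℝ X] [CompleteSpace X] (μ : Set X → ℝ) (hμ : IsConvexMNC X μ)
    (a : ℝ) (ha : 0 < a)
    (G : Set (ℝ → X)) (hGne : G.Nonempty)
    (hGcont : ∀ g ∈ G, ContinuousOn g (Icc 0 a))
    (hGequi : ∀ ε : ℝ, 0 < ε → ∀ t₀ ∈ Icc (0 : ℝ) a, ∃ δ : ℝ, 0 < δ ∧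
      ∀ g ∈ G, ∀ t ∈ Icc (0 : ℝ) a, |t - t₀| < δ → ‖g t - g t₀‖ ≤ ε)
    (hGbdd : ∃ M : ℝ, ∀ g ∈ G, ∀ t ∈ Icc (0 : ℝ) a, ‖g t‖ ≤ M) :
    (∀ t : ℝ, 0 < t → t ≤ a →
      ENNReal.ofReal (μ ((fun g : ℝ → X => ∫ s in Ioc (0 : ℝ) t, g s) '' G)) ≤
        (ENNReal.ofReal t)⁻¹ *
          ∫⁻ s in Ioc (0 : ℝ) t,
            ENNReal.ofReal (μ (t • ((fun g : ℝ → X => g s) '' G)))) ∧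
    (∀ t : ℝ, (0 < t ∧ t ≤ min 1 a) ∨ (IsSublinearMNC X μ ∧ 0 < t ∧ t ≤ a) →
      ENNReal.ofReal (μ ((fun g : ℝ → X => ∫ s in Ioc (0 : ℝ) t, g s) '' G)) ≤
        ∫⁻ s in Ioc (0 : ℝ) t, ENNReal.ofReal (μ ((fun g : ℝ → X => g s) '' G))) :=
  convexMNC_integral_ineq_of_equicontinuous_general μ hμ a G hGne hGequi hGbdd
end

section
/- Let X be a real Banach space and let 𝒟 be a fundamental closed sub-semigroup of 𝒞(X). Then 𝒟 contains every nonempty compact convex subset of X. -/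
open Set Bornology Pointwise

/-- A fundamental closed sub-semigroup `𝒟` of the semigroup `𝒞(X)` of all nonempty bounded
closed convex subsets of `X` (with addition `A ⊕ B = closure (A + B)`, scalar multiplication
and the Hausdorff metric). -/
structure IsFundamental (X : Type*) [NormedAddCommGroup X] [NormedSpace ℝ X]
    (𝒟 : Set (Set X)) : Prop where
  /-- `𝒟 ⊆ 𝒞(X)`: every member is nonempty, bounded, closed and convex. -/
  mem_C : ∀ D ∈ 𝒟, D.Nonempty ∧ IsBounded D ∧ IsClosed D ∧ Convex ℝ D
  /-- closed under the semigroup addition `A ⊕ B = closure (A + B)` -/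
  add_mem : ∀ A ∈ 𝒟, ∀ B ∈ 𝒟, closure (A + B) ∈ 𝒟
  /-- closed under scalar multiplication -/
  smul_mem : ∀ A ∈ 𝒟, ∀ c : ℝ, c • A ∈ 𝒟
  /-- `𝒟` is closed in `𝒞(X)` with respect to the Hausdorff metric -/
  isClosed : ∀ C : Set X, C.Nonempty → IsBounded C → IsClosed C → Convex ℝ C →
    (∀ ε : ℝ, 0 < ε → ∃ D ∈ 𝒟, EMetric.hausdorffEdist C D < ENNReal.ofReal ε) → C ∈ 𝒟
  /-- (1) the members of `𝒟` cover `X` -/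
  covers : ⋃₀ 𝒟 = (univ : Set X)
  /-- (2) `A, B ∈ 𝒟` implies `closure (convexHull (±A ∪ ±B)) ∈ 𝒟` -/
  absConvexHull_mem : ∀ A ∈ 𝒟, ∀ B ∈ 𝒟,
    closure (convexHull ℝ (A ∪ -A ∪ B ∪ -B)) ∈ 𝒟
  /-- (3) nonempty subsets of members have their closed convex hull in `𝒟` -/
  closure_convexHull_mem : ∀ B : Set X, B.Nonempty → ∀ D ∈ 𝒟, B ⊆ D →
    closure (convexHull ℝ B) ∈ 𝒟

/-!
Cover a compact convex set `K` by a finite `ε`-net `t ⊆ K`. The closed convex hull of `t` lies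
between `t` and `K`, so it is `ε`-close to `K` in the Hausdorff distance; it belongs to `𝒟` by
axiom (3), since axioms (1) and (2) put any finite set inside a single member of `𝒟`. Closedness
of `𝒟` in the Hausdorff metric then gives `K ∈ 𝒟`.
-/

open Metric

namespace IsFundamental

variable {X : Type*} [NormedAddCommGroup X] [NormedSpace ℝ X] {𝒟 : Set (Set X)}

theorem exists_mem_contains (h𝒟 : IsFundamental X 𝒟) (x : X) : ∃ D ∈ 𝒟, x ∈ D :=
  mem_sUnion.1 (h𝒟.covers ▸ mem_univ x)

theorem exists_union_subset_mem (h𝒟 : IsFundamental X 𝒟) {A B : Set X} (hA : A ∈ 𝒟)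
    (hB : B ∈ 𝒟) : ∃ D ∈ 𝒟, A ∪ B ⊆ D := by
  refine ⟨_, h𝒟.absConvexHull_mem A hA B hB, ?_⟩
  have hAB : A ∪ B ⊆ A ∪ -A ∪ B ∪ -B := by
    rintro x (hx | hx) <;> simp [hx]
  exact hAB.trans ((subset_convexHull ℝ _).trans subset_closure)

theorem exists_subset_mem_of_finite (h𝒟 : IsFundamental X 𝒟) {t : Set X} (ht : t.Finite) :
    ∃ D ∈ 𝒟, t ⊆ D := by
  induction t, ht using Set.Finite.induction_on with
  | empty =>
    obtain ⟨D, hD, -⟩ := h𝒟.exists_mem_contains 0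
    exact ⟨D, hD, empty_subset D⟩
  | @insert a s _ _ ih =>
    obtain ⟨Da, hDa, haDa⟩ := h𝒟.exists_mem_contains a
    obtain ⟨Ds, hDs, hsDs⟩ := ih
    obtain ⟨D, hD, hDaDs⟩ := h𝒟.exists_union_subset_mem hDa hDs
    exact ⟨D, hD,
      insert_subset (hDaDs (Or.inl haDa)) (hsDs.trans (subset_union_right.trans hDaDs))⟩

theorem closure_convexHull_mem_of_finite (h𝒟 : IsFundamental X 𝒟) {t : Set X}
    (hne : t.Nonempty) (ht : t.Finite) : closure (convexHull ℝ t) ∈ 𝒟 := by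
  obtain ⟨D, hD, htD⟩ := h𝒟.exists_subset_mem_of_finite ht
  exact h𝒟.closure_convexHull_mem t hne D hD htD

end IsFundamental

section HausdorffDistance

variable {α : Type*} [PseudoEMetricSpace α]

theorem Metric.hausdorffEDist_le_of_subset_of_subset {s t u : Set α} (htu : t ⊆ u)
    (hus : u ⊆ s) : hausdorffEDist s u ≤ hausdorffEDist s t :=
  hausdorffEDist_le_of_infEDist
    (fun _ hx ↦ (infEDist_anti htu).trans (infEDist_le_hausdorffEDist_of_mem hx))
    (fun _ hx ↦ (infEDist_zero_of_mem (hus hx)).trans_le bot_le)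

theorem TotallyBounded.exists_finite_subset_hausdorffEDist_lt {s : Set α}
    (hs : TotallyBounded s) {ε : ENNReal} (hε : 0 < ε) :
    ∃ t ⊆ s, t.Finite ∧ hausdorffEDist s t < ε := by
  obtain ⟨δ, hδ, hδε⟩ := exists_between hε
  obtain ⟨t, hts, ht, hcover⟩ := EMetric.totallyBounded_iff'.1 hs δ hδ
  refine ⟨t, hts, ht, lt_of_le_of_lt ?_ hδε⟩
  refine hausdorffEDist_le_of_mem_edist (fun x hx ↦ ?_) (fun x hx ↦ ⟨x, hts hx, by simp⟩)
  obtain ⟨y, hy, hxy⟩ := mem_iUnion₂.1 (hcover hx)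
  exact ⟨y, hy, (mem_eball.1 hxy).le⟩

end HausdorffDistance

theorem isCompact_convex_mem_of_isFundamental_general {X : Type*} [NormedAddCommGroup X]
    [NormedSpace ℝ X] (𝒟 : Set (Set X)) (h𝒟 : IsFundamental X 𝒟) :
    ∀ K : Set X, K.Nonempty → IsCompact K → Convex ℝ K → K ∈ 𝒟 := by
  intro K hKne hK hKconv
  refine h𝒟.isClosed K hKne hK.isBounded hK.isClosed hKconv fun ε hε ↦ ?_
  obtain ⟨t, htK, ht, hdist⟩ :=
    hK.totallyBounded.exists_finite_subset_hausdorffEDist_lt (ENNReal.ofReal_pos.2 hε)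
  have htne : t.Nonempty := nonempty_of_hausdorffEDist_ne_top hKne hdist.ne_top
  refine ⟨closure (convexHull ℝ t), h𝒟.closure_convexHull_mem_of_finite htne ht, ?_⟩
  have htC : t ⊆ closure (convexHull ℝ t) := (subset_convexHull ℝ t).trans subset_closure
  have hCK : closure (convexHull ℝ t) ⊆ K :=
    closure_minimal (convexHull_min htK hKconv) hK.isClosed
  exact (hausdorffEDist_le_of_subset_of_subset htC hCK).trans_lt hdist

/-- Every fundamental closed sub-semigroup of `𝒞(X)` contains every nonempty compact
convex subset of `X`. -/
theorem isCompact_convex_mem_of_isFundamental {X : Type*} [NormedAddCommGroup X]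
    [NormedSpace ℝ X] [CompleteSpace X] (𝒟 : Set (Set X)) (h𝒟 : IsFundamental X 𝒟) :
    ∀ K : Set X, K.Nonempty → IsCompact K → Convex ℝ K → K ∈ 𝒟 :=
  isCompact_convex_mem_of_isFundamental_general 𝒟 h𝒟
end

section
/- Let X be a real Banach space, let 𝒟 be a fundamental closed sub-semigroup of 𝒞(X), and let μ be a convex measure of non-property 𝔇 on X (relative to 𝒟). Then: (i) μ(cl B) = μ(B) for every nonempty bounded B ⊆ X, where cl denotes norm closure; (ii) μ(B + D) = μ(B) for every nonempty bounded B ⊆ X and every D ∈ 𝒟; (iii) μ(B ∪ D) = μ(B) for every nonempty bounded B ⊆ X and every D ∈ 𝒟. -/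
/-!
Convexity lets `μ` absorb a bounded perturbation at vanishing cost: if
`C ⊆ (1 - s) • A + s • K s` and `μ (K s) ≤ M` for all `s ∈ (0, 1]`, then
`μ C ≤ (1 - s) μ A + s M` for all such `s`, so `μ C ≤ μ A`. For `C = B + D` with `D ∈ 𝒟` use
`K s = B + s⁻¹ • D`, whose measure is at most `μ (2 • B) / 2` because `2 s⁻¹ • D ∈ 𝒟` is
`μ`-null; for `C = closure B` use `K s = B + closedBall 0 1`, as each point of `closure B` lies
within `s` of `B`. The reverse inequalities are monotonicity, via `B ⊆ (B + D) + (-1) • D` for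
(ii). For (iii), pick `b ∈ B` and `E ∈ 𝒟` containing `0` and `D - b`; then `B ∪ D ⊆ B + E`.
-/

open Set Bornology Pointwise

/-- A convex measure of non-property `𝔇` (convex MNP𝔇) relative to a fundamental
sub-semigroup `𝒟`: it vanishes exactly on the bounded sets whose closed convex hull lies
in `𝒟`, is monotone, invariant under convex hulls, and convex. -/
structure IsConvexMNPD (X : Type*) [NormedAddCommGroup X] [NormedSpace ℝ X]
    (𝒟 : Set (Set X)) (μ : Set X → ℝ) : Prop where
  nonneg : ∀ B : Set X, B.Nonempty → IsBounded B → 0 ≤ μ B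
  eq_zero_iff : ∀ B : Set X, B.Nonempty → IsBounded B →
    (μ B = 0 ↔ closure (convexHull ℝ B) ∈ 𝒟)
  mono : ∀ A B : Set X, B.Nonempty → IsBounded A → B ⊆ A → μ B ≤ μ A
  convexHull_inv : ∀ B : Set X, B.Nonempty → IsBounded B → μ (convexHull ℝ B) = μ B
  convex : ∀ A B : Set X, A.Nonempty → B.Nonempty → IsBounded A → IsBounded B →
    ∀ l : ℝ, 0 ≤ l → l ≤ 1 → μ (l • A + (1 - l) • B) ≤ l * μ A + (1 - l) * μ B

open Filter Topology

lemma le_of_forall_le_one_sub_mul_add_mul_s17 {x a M : ℝ}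
    (h : ∀ s ∈ Ioc (0 : ℝ) 1, x ≤ (1 - s) * a + s * M) : x ≤ a := by
  have hlim : Tendsto (fun s : ℝ => (1 - s) * a + s * M) (𝓝[>] 0) (𝓝 a) := by
    have hcont : Continuous (fun s : ℝ => (1 - s) * a + s * M) := by fun_prop
    simpa using (hcont.tendsto 0).mono_left nhdsWithin_le_nhds
  exact ge_of_tendsto hlim (eventually_of_mem (Ioc_mem_nhdsGT one_pos) h)

section

variable {X : Type*} [NormedAddCommGroup X] [NormedSpace ℝ X] {𝒟 : Set (Set X)}

namespace IsFundamental

lemma singleton_mem (h𝒟 : IsFundamental X 𝒟) (x : X) : ({x} : Set X) ∈ 𝒟 := by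
  obtain ⟨D, hD, hxD⟩ : x ∈ ⋃₀ 𝒟 := h𝒟.covers ▸ mem_univ x
  simpa using h𝒟.closure_convexHull_mem {x} (singleton_nonempty x) D hD
    (singleton_subset_iff.2 hxD)

lemma exists_zero_mem_add_singleton_subset (h𝒟 : IsFundamental X 𝒟) {D : Set X}
    (hD : D ∈ 𝒟) (x : X) : ∃ E ∈ 𝒟, (0 : X) ∈ E ∧ D + {x} ⊆ E := by
  set A := closure (D + {x})
  set S := A ∪ -A ∪ {0} ∪ -{0}
  have hAS : A ⊆ S := subset_union_left.trans (subset_union_left.trans subset_union_left)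
  have h0S : (0 : X) ∈ S := Or.inl (Or.inr rfl)
  refine ⟨closure (convexHull ℝ S),
    h𝒟.absConvexHull_mem A (h𝒟.add_mem D hD {x} (h𝒟.singleton_mem x)) {0}
      (h𝒟.singleton_mem 0), subset_closure (subset_convexHull ℝ S h0S), ?_⟩
  exact subset_closure.trans (hAS.trans ((subset_convexHull ℝ S).trans subset_closure))

end IsFundamental

namespace IsConvexMNPD

variable {μ : Set X → ℝ}

lemma eq_zero_of_mem (h𝒟 : IsFundamental X 𝒟) (hμ : IsConvexMNPD X 𝒟 μ) {D : Set X}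
    (hD : D ∈ 𝒟) : μ D = 0 := by
  obtain ⟨hne, hbdd, hclosed, hconv⟩ := h𝒟.mem_C D hD
  rwa [hμ.eq_zero_iff D hne hbdd, hconv.convexHull_eq, hclosed.closure_eq]

lemma le_of_forall_subset_smul_add_smul (hμ : IsConvexMNPD X 𝒟 μ) {A C : Set X}
    (hA : A.Nonempty) (hAb : IsBounded A) (hC : C.Nonempty) (K : ℝ → Set X) (M : ℝ)
    (hK : ∀ s ∈ Ioc (0 : ℝ) 1, (K s).Nonempty ∧ IsBounded (K s) ∧ μ (K s) ≤ M ∧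
      C ⊆ (1 - s) • A + s • K s) :
    μ C ≤ μ A := by
  refine le_of_forall_le_one_sub_mul_add_mul_s17 (M := M) fun s hs => ?_
  obtain ⟨hKne, hKb, hKM, hCK⟩ := hK s hs
  have hconvex := hμ.convex A (K s) hA hKne hAb hKb (1 - s) (by linarith [hs.2])
    (by linarith [hs.1])
  rw [sub_sub_cancel] at hconvex
  calc μ C ≤ μ ((1 - s) • A + s • K s) :=
        hμ.mono _ _ hC ((hAb.smul₀ _).add (hKb.smul₀ _)) hCK
    _ ≤ (1 - s) * μ A + s * μ (K s) := hconvex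
    _ ≤ (1 - s) * μ A + s * M := by gcongr; exact hs.1.le

lemma add_le_two_smul_div_two (h𝒟 : IsFundamental X 𝒟) (hμ : IsConvexMNPD X 𝒟 μ)
    {A D : Set X} (hA : A.Nonempty) (hAb : IsBounded A)
    (hD : D ∈ 𝒟) : μ (A + D) ≤ μ ((2 : ℝ) • A) / 2 := by
  obtain ⟨hDne, hDb, -, -⟩ := h𝒟.mem_C D hD
  have hsplit : A + D = (1 / 2 : ℝ) • ((2 : ℝ) • A) + (1 - 1 / 2 : ℝ) • ((2 : ℝ) • D) := by
    simp only [smul_smul]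
    norm_num
  have hconvex := hμ.convex ((2 : ℝ) • A) ((2 : ℝ) • D) hA.smul_set hDne.smul_set
    (hAb.smul₀ 2) (hDb.smul₀ 2) (1 / 2) (by norm_num) (by norm_num)
  rw [← hsplit, hμ.eq_zero_of_mem h𝒟 (h𝒟.smul_mem D hD 2)] at hconvex
  linarith

lemma add_le (h𝒟 : IsFundamental X 𝒟) (hμ : IsConvexMNPD X 𝒟 μ)
    {B D : Set X} (hB : B.Nonempty) (hBb : IsBounded B) (hD : D ∈ 𝒟) :
    μ (B + D) ≤ μ B := by
  obtain ⟨hDne, -, -, -⟩ := h𝒟.mem_C D hD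
  refine hμ.le_of_forall_subset_smul_add_smul hB hBb (hB.add hDne)
    (fun s => B + s⁻¹ • D) (μ ((2 : ℝ) • B) / 2) fun s hs => ?_
  have hDs := h𝒟.smul_mem D hD s⁻¹
  obtain ⟨hDsne, hDsb, -, -⟩ := h𝒟.mem_C _ hDs
  refine ⟨hB.add hDsne, hBb.add hDsb, hμ.add_le_two_smul_div_two h𝒟 hB hBb hDs, ?_⟩
  rintro _ ⟨b, hb, d, hd, rfl⟩
  have hcomb : (1 - s) • b + s • (b + s⁻¹ • d) = b + d := by
    rw [smul_add, smul_inv_smul₀ hs.1.ne']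
    module
  change b + d ∈ _
  rw [← hcomb]
  exact add_mem_add (smul_mem_smul_set hb)
    (smul_mem_smul_set (add_mem_add hb (smul_mem_smul_set hd)))

lemma add_eq (h𝒟 : IsFundamental X 𝒟) (hμ : IsConvexMNPD X 𝒟 μ)
    {B D : Set X} (hB : B.Nonempty) (hBb : IsBounded B) (hD : D ∈ 𝒟) :
    μ (B + D) = μ B := by
  obtain ⟨hDne, hDb, -, -⟩ := h𝒟.mem_C D hD
  refine le_antisymm (hμ.add_le h𝒟 hB hBb hD) ?_
  obtain ⟨d, hd⟩ := hDne
  have hsub : B ⊆ (B + D) + (-1 : ℝ) • D := fun b hb => by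
    simpa using add_mem_add (add_mem_add hb hd) (smul_mem_smul_set (a := (-1 : ℝ)) hd)
  calc μ B ≤ μ ((B + D) + (-1 : ℝ) • D) :=
        hμ.mono _ _ hB ((hBb.add hDb).add (hDb.smul₀ _)) hsub
    _ ≤ μ (B + D) :=
        hμ.add_le h𝒟 (hB.add ⟨d, hd⟩) (hBb.add hDb) (h𝒟.smul_mem D hD (-1))

lemma closure_eq (hμ : IsConvexMNPD X 𝒟 μ) {B : Set X} (hB : B.Nonempty)
    (hBb : IsBounded B) :
    μ (closure B) = μ B := by
  refine le_antisymm ?_ (hμ.mono _ _ hB hBb.closure subset_closure)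
  set K := B + Metric.closedBall (0 : X) 1
  have hKne : K.Nonempty := hB.add ⟨0, Metric.mem_closedBall_self zero_le_one⟩
  have hKb : IsBounded K := hBb.add Metric.isBounded_closedBall
  refine hμ.le_of_forall_subset_smul_add_smul hB hBb hB.closure (fun _ => K) (μ K)
    fun s hs => ⟨hKne, hKb, le_rfl, fun x hx => ?_⟩
  obtain ⟨c, hc, hxc⟩ := Metric.mem_closure_iff.1 hx s hs.1
  have hball : s⁻¹ • (x - c) ∈ Metric.closedBall (0 : X) 1 := by
    rw [mem_closedBall_zero_iff, norm_smul, norm_inv, Real.norm_of_nonneg hs.1.le,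
      inv_mul_le_iff₀ hs.1, mul_one, ← dist_eq_norm]
    exact hxc.le
  have hcomb : (1 - s) • c + s • (c + s⁻¹ • (x - c)) = x := by
    rw [smul_add, smul_inv_smul₀ hs.1.ne']
    module
  rw [← hcomb]
  exact add_mem_add (smul_mem_smul_set hc) (smul_mem_smul_set (add_mem_add hc hball))

lemma union_eq (h𝒟 : IsFundamental X 𝒟) (hμ : IsConvexMNPD X 𝒟 μ)
    {B D : Set X} (hB : B.Nonempty) (hBb : IsBounded B) (hD : D ∈ 𝒟) :
    μ (B ∪ D) = μ B := by
  obtain ⟨b, hb⟩ := hB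
  obtain ⟨E, hE, h0E, hDE⟩ := h𝒟.exists_zero_mem_add_singleton_subset hD (-b)
  obtain ⟨-, hEb, -, -⟩ := h𝒟.mem_C E hE
  obtain ⟨-, hDb, -, -⟩ := h𝒟.mem_C D hD
  have hsub : B ∪ D ⊆ B + E := by
    rintro x (hx | hx)
    · simpa using add_mem_add hx h0E
    · simpa using add_mem_add hb (hDE (add_mem_add hx (mem_singleton (-b))))
  refine le_antisymm ?_ (hμ.mono _ _ ⟨b, hb⟩ (hBb.union hDb) subset_union_left)
  calc μ (B ∪ D) ≤ μ (B + E) := hμ.mono _ _ (.inl ⟨b, hb⟩) (hBb.add hEb) hsub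
    _ ≤ μ B := hμ.add_le h𝒟 ⟨b, hb⟩ hBb hE

end IsConvexMNPD

end

theorem convexMNPD_basic_properties_general {X : Type*} [NormedAddCommGroup X]
    [NormedSpace ℝ X] (𝒟 : Set (Set X)) (h𝒟 : IsFundamental X 𝒟)
    (μ : Set X → ℝ) (hμ : IsConvexMNPD X 𝒟 μ) :
    (∀ B : Set X, B.Nonempty → IsBounded B → μ (closure B) = μ B) ∧
    (∀ B : Set X, B.Nonempty → IsBounded B → ∀ D ∈ 𝒟, μ (B + D) = μ B) ∧
    (∀ B : Set X, B.Nonempty → IsBounded B → ∀ D ∈ 𝒟, μ (B ∪ D) = μ B) :=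
  ⟨fun _ hB hBb => hμ.closure_eq hB hBb,
    fun _ hB hBb _ hD => hμ.add_eq h𝒟 hB hBb hD,
    fun _ hB hBb _ hD => hμ.union_eq h𝒟 hB hBb hD⟩

/-- Basic properties of a convex MNP𝔇: (i) density determination, (ii) translation
invariance by members of `𝒟`, and (iii) negligibility of members of `𝒟`. -/
theorem convexMNPD_basic_properties {X : Type*} [NormedAddCommGroup X]
    [NormedSpace ℝ X] [CompleteSpace X] (𝒟 : Set (Set X)) (h𝒟 : IsFundamental X 𝒟)
    (μ : Set X → ℝ) (hμ : IsConvexMNPD X 𝒟 μ) :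
    (∀ B : Set X, B.Nonempty → IsBounded B → μ (closure B) = μ B) ∧
    (∀ B : Set X, B.Nonempty → IsBounded B → ∀ D ∈ 𝒟, μ (B + D) = μ B) ∧
    (∀ B : Set X, B.Nonempty → IsBounded B → ∀ D ∈ 𝒟, μ (B ∪ D) = μ B) :=
  convexMNPD_basic_properties_general 𝒟 h𝒟 μ hμ
end

section
/- Let X be a real Banach space, I = [0,a] with a > 0, μ a convex MNC on X, and B a nonempty subset of C(I,X) that is bounded in the supremum norm. Then there exists a constant L_B > 0 such that |μ(B(t)) − μ(B(s))| ≤ L_B · ω(B, |t − s|) for all t, s ∈ I, where B(t) = {x(t) : x ∈ B} and ω(B,ε) = sup{‖x(t) − x(s)‖ : x ∈ B, t, s ∈ I, |t − s| ≤ ε}. In particular, if B is equicontinuous, then t ↦ μ(B(t)) is continuous on I. -/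
open Set Bornology Pointwise

/-- The modulus of continuity `ω(B, ε)` of a family `B` of functions `[0,a] → X`. -/
noncomputable def modulus {X : Type*} [NormedAddCommGroup X]
    (a : ℝ) (B : Set (ℝ → X)) (ε : ℝ) : ℝ :=
  sSup {d : ℝ | ∃ x ∈ B, ∃ t ∈ Icc (0 : ℝ) a, ∃ s ∈ Icc (0 : ℝ) a,
    |t - s| ≤ ε ∧ d = ‖x t - x s‖}

/-!
If every point of `A` lies within `λρ` of a set `C ⊆ B(0, M)`, then writing
`x = (1 - λ) c + λ (c + λ⁻¹ (x - c))` shows `A ⊆ (1 - λ) C + λ B(0, M + ρ)`; convexity and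
monotonicity of `μ` then give `μ A ≤ μ C + λ μ(B(0, M + ρ))`. For two sections `B(t)`, `B(s)`
of a family bounded by `M`, every point of one is within `ω(B, |t - s|)` of the other, and
taking `ρ = 2M`, `λ = min(ω, 2M) / 2M` yields the estimate with `L_B` essentially
`μ(B(0, 3M)) / 2M`.
-/

open Metric

theorem subset_smul_add_smul_closedBall {E : Type*} [NormedAddCommGroup E] [NormedSpace ℝ E]
    {A C : Set E} {M ρ l : ℝ} (hC : C ⊆ closedBall 0 M) (hρ : 0 ≤ ρ) (hl : 0 ≤ l)
    (hAC : ∀ x ∈ A, ∃ c ∈ C, ‖x - c‖ ≤ l * ρ) :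
    A ⊆ (1 - l) • C + l • closedBall (0 : E) (M + ρ) := by
  intro x hx
  obtain ⟨c, hc, hxc⟩ := hAC x hx
  refine ⟨(1 - l) • c, smul_mem_smul_set hc, l • (c + l⁻¹ • (x - c)),
    smul_mem_smul_set ?_, ?_⟩
  · have hscaled : l⁻¹ * ‖x - c‖ ≤ ρ := by
      rcases hl.eq_or_lt with rfl | hl₀
      · simpa using hρ
      · exact (inv_mul_le_iff₀ hl₀).2 hxc
    rw [mem_closedBall_zero_iff]
    calc ‖c + l⁻¹ • (x - c)‖ ≤ ‖c‖ + l⁻¹ * ‖x - c‖ := by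
          grw [norm_add_le, norm_smul, Real.norm_of_nonneg (inv_nonneg.2 hl)]
      _ ≤ M + ρ := add_le_add (mem_closedBall_zero_iff.1 (hC hc)) hscaled
  · rcases hl.eq_or_lt with rfl | hl₀
    · have : x = c := by simpa [sub_eq_zero] using hxc
      simp [this]
    · simp only [smul_add, smul_smul, mul_inv_cancel₀ hl₀.ne', one_smul]
      module

namespace IsConvexMNC

variable {X : Type*} [NormedAddCommGroup X] [NormedSpace ℝ X] {μ : Set X → ℝ}

theorem le_of_subset_smul_add_smul (hμ : IsConvexMNC X μ) {A C D : Set X} {l : ℝ}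
    (hA : A.Nonempty) (hC : C.Nonempty) (hD : D.Nonempty) (hCb : IsBounded C)
    (hDb : IsBounded D) (hl₀ : 0 ≤ l) (hl₁ : l ≤ 1)
    (hACD : A ⊆ (1 - l) • C + l • D) :
    μ A ≤ (1 - l) * μ C + l * μ D := by
  have hconvex := hμ.convex C D hC hD hCb hDb (1 - l) (by linarith) (by linarith)
  rw [sub_sub_cancel] at hconvex
  exact (hμ.mono _ _ hA ((hCb.smul₀ _).add (hDb.smul₀ _)) hACD).trans hconvex

theorem nonneg_closedBall (hμ : IsConvexMNC X μ) {R : ℝ} (hR : 0 ≤ R) :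
    0 ≤ μ (closedBall (0 : X) R) :=
  hμ.nonneg _ (nonempty_closedBall.2 hR) isBounded_closedBall

theorem sub_le_of_forall_exists_norm_sub_le (hμ : IsConvexMNC X μ) {A C : Set X} {M r : ℝ}
    (hM : 0 < M) (hr : 0 ≤ r) (hA : A.Nonempty) (hC : C.Nonempty)
    (hAM : A ⊆ closedBall 0 M) (hCM : C ⊆ closedBall 0 M)
    (hAC : ∀ x ∈ A, ∃ c ∈ C, ‖x - c‖ ≤ r) :
    μ A - μ C ≤ r * (μ (closedBall (0 : X) (3 * M)) / (2 * M)) := by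
  set l := min r (2 * M) / (2 * M)
  have hl₀ : 0 ≤ l := by positivity
  have hl₁ : l ≤ 1 := (div_le_one (by positivity)).2 (min_le_right _ _)
  have hlr : l ≤ r / (2 * M) := div_le_div_of_nonneg_right (min_le_left _ _) (by positivity)
  have hAC' : ∀ x ∈ A, ∃ c ∈ C, ‖x - c‖ ≤ l * (2 * M) := by
    intro x hx
    obtain ⟨c, hc, hxc⟩ := hAC x hx
    refine ⟨c, hc, ?_⟩
    rw [div_mul_cancel₀ _ (by positivity), le_min_iff]
    refine ⟨hxc, (norm_sub_le x c).trans ?_⟩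
    linarith [mem_closedBall_zero_iff.1 (hAM hx), mem_closedBall_zero_iff.1 (hCM hc)]
  have hsub := subset_smul_add_smul_closedBall hCM (by positivity) hl₀ hAC'
  rw [show M + 2 * M = 3 * M by ring] at hsub
  have hD := hμ.nonneg_closedBall (X := X) (R := 3 * M) (by positivity)
  have hμC := hμ.nonneg C hC (isBounded_closedBall.subset hCM)
  have hμA := hμ.le_of_subset_smul_add_smul hA hC (nonempty_closedBall.2 (by positivity))
    (isBounded_closedBall.subset hCM) isBounded_closedBall hl₀ hl₁ hsub
  calc μ A - μ C ≤ l * μ (closedBall 0 (3 * M)) := by nlinarith [mul_nonneg hl₀ hμC]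
    _ ≤ r / (2 * M) * μ (closedBall 0 (3 * M)) := by gcongr
    _ = r * (μ (closedBall 0 (3 * M)) / (2 * M)) := by ring

theorem abs_sub_image_le {α : Type*} (hμ : IsConvexMNC X μ) {S : Set α} {f g : α → X}
    {M r : ℝ} (hS : S.Nonempty) (hM : 0 < M) (hr : 0 ≤ r) (hf : ∀ i ∈ S, ‖f i‖ ≤ M)
    (hg : ∀ i ∈ S, ‖g i‖ ≤ M) (hfg : ∀ i ∈ S, ‖f i - g i‖ ≤ r) :
    |μ (f '' S) - μ (g '' S)| ≤ r * (μ (closedBall (0 : X) (3 * M)) / (2 * M)) := by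
  have hfM : f '' S ⊆ closedBall 0 M :=
    image_subset_iff.2 fun i hi => mem_closedBall_zero_iff.2 (hf i hi)
  have hgM : g '' S ⊆ closedBall 0 M :=
    image_subset_iff.2 fun i hi => mem_closedBall_zero_iff.2 (hg i hi)
  refine abs_sub_le_iff.2 ⟨?_, ?_⟩
  · refine hμ.sub_le_of_forall_exists_norm_sub_le hM hr (hS.image f) (hS.image g) hfM hgM ?_
    exact forall_mem_image.2 fun i hi => ⟨g i, mem_image_of_mem g hi, hfg i hi⟩
  · refine hμ.sub_le_of_forall_exists_norm_sub_le hM hr (hS.image g) (hS.image f) hgM hfM ?_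
    exact forall_mem_image.2 fun i hi =>
      ⟨f i, mem_image_of_mem f hi, by rw [norm_sub_rev]; exact hfg i hi⟩

end IsConvexMNC

theorem modulus_nonneg {X : Type*} [NormedAddCommGroup X] (a : ℝ) (B : Set (ℝ → X)) (ε : ℝ) :
    0 ≤ modulus a B ε :=
  Real.sSup_nonneg fun _ ⟨x, _, t, _, s, _, _, hd⟩ => hd ▸ norm_nonneg (x t - x s)

theorem norm_sub_le_modulus {X : Type*} [NormedAddCommGroup X] {a M ε : ℝ} {B : Set (ℝ → X)}
    (hM : ∀ x ∈ B, ∀ t ∈ Icc (0 : ℝ) a, ‖x t‖ ≤ M) {x : ℝ → X} (hx : x ∈ B)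
    {t s : ℝ} (ht : t ∈ Icc 0 a) (hs : s ∈ Icc 0 a) (hts : |t - s| ≤ ε) :
    ‖x t - x s‖ ≤ modulus a B ε := by
  refine le_csSup ⟨M + M, ?_⟩ ⟨x, hx, t, ht, s, hs, hts, rfl⟩
  rintro _ ⟨y, hy, t', ht', s', hs', -, rfl⟩
  exact (norm_sub_le _ _).trans (add_le_add (hM y hy t' ht') (hM y hy s' hs'))

theorem convexMNC_section_lipschitz_modulus_general {X : Type*} [NormedAddCommGroup X]
    [NormedSpace ℝ X] (μ : Set X → ℝ) (hμ : IsConvexMNC X μ)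
    (a : ℝ) (B : Set (ℝ → X)) (hBne : B.Nonempty)
    (hBbdd : ∃ M : ℝ, ∀ x ∈ B, ∀ t ∈ Icc (0 : ℝ) a, ‖x t‖ ≤ M) :
    (∃ L : ℝ, 0 < L ∧ ∀ t ∈ Icc (0 : ℝ) a, ∀ s ∈ Icc (0 : ℝ) a,
      |μ ((fun x : ℝ → X => x t) '' B) - μ ((fun x : ℝ → X => x s) '' B)| ≤
        L * modulus a B (|t - s|)) ∧
    ((∀ ε : ℝ, 0 < ε → ∀ t₀ ∈ Icc (0 : ℝ) a, ∃ δ : ℝ, 0 < δ ∧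
        ∀ x ∈ B, ∀ t ∈ Icc (0 : ℝ) a, |t - t₀| < δ → ‖x t - x t₀‖ ≤ ε) →
      ContinuousOn (fun t => μ ((fun x : ℝ → X => x t) '' B)) (Icc 0 a)) := by
  obtain ⟨M₀, hM₀⟩ := hBbdd
  have hM : ∀ x ∈ B, ∀ t ∈ Icc (0 : ℝ) a, ‖x t‖ ≤ max M₀ 1 :=
    fun x hx t ht => (hM₀ x hx t ht).trans (le_max_left _ _)
  set K := μ (closedBall (0 : X) (3 * max M₀ 1)) / (2 * max M₀ 1)
  have hK : 0 ≤ K := div_nonneg (hμ.nonneg_closedBall (by positivity)) (by positivity)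
  have hsection : ∀ t ∈ Icc (0 : ℝ) a, ∀ s ∈ Icc (0 : ℝ) a, ∀ r, 0 ≤ r →
      (∀ x ∈ B, ‖x t - x s‖ ≤ r) →
      |μ ((fun x : ℝ → X => x t) '' B) - μ ((fun x : ℝ → X => x s) '' B)| ≤ r * K :=
    fun t ht s hs r hr hts => hμ.abs_sub_image_le hBne (by positivity) hr
      (fun x hx => hM x hx t ht) (fun x hx => hM x hx s hs) hts
  refine ⟨⟨K + 1, by positivity, fun t ht s hs => ?_⟩, fun hequi => ?_⟩
  · have hω := modulus_nonneg a B |t - s|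
    calc _ ≤ modulus a B |t - s| * K :=
          hsection t ht s hs _ hω fun x hx => norm_sub_le_modulus hM hx ht hs le_rfl
      _ ≤ (K + 1) * modulus a B |t - s| := by nlinarith
  · refine Metric.continuousOn_iff.2 fun t₀ ht₀ ε hε => ?_
    obtain ⟨δ, hδ, hB⟩ := hequi (ε / (K + 1)) (by positivity) t₀ ht₀
    refine ⟨δ, hδ, fun t ht htt₀ => ?_⟩
    calc dist _ _ ≤ ε / (K + 1) * K := (Real.dist_eq _ _).trans_le <|
          hsection t ht t₀ ht₀ _ (by positivity) fun x hx => hB x hx t ht htt₀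
      _ < ε := by rw [div_mul_eq_mul_div, div_lt_iff₀ (by positivity)]; linarith

/-- For a nonempty, uniformly bounded family `B ⊆ C([0,a],X)` and a convex MNC `μ`, the
function `t ↦ μ(B(t))` satisfies `|μ(B(t)) − μ(B(s))| ≤ L_B · ω(B, |t − s|)` for some
constant `L_B > 0`; in particular it is continuous whenever `B` is equicontinuous. -/
theorem convexMNC_section_lipschitz_modulus {X : Type*} [NormedAddCommGroup X]
    [NormedSpace ℝ X] [CompleteSpace X] (μ : Set X → ℝ) (hμ : IsConvexMNC X μ)
    (a : ℝ) (ha : 0 < a) (B : Set (ℝ → X)) (hBne : B.Nonempty)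
    (hBcont : ∀ x ∈ B, ContinuousOn x (Icc 0 a))
    (hBbdd : ∃ M : ℝ, ∀ x ∈ B, ∀ t ∈ Icc (0 : ℝ) a, ‖x t‖ ≤ M) :
    (∃ L : ℝ, 0 < L ∧ ∀ t ∈ Icc (0 : ℝ) a, ∀ s ∈ Icc (0 : ℝ) a,
      |μ ((fun x : ℝ → X => x t) '' B) - μ ((fun x : ℝ → X => x s) '' B)| ≤
        L * modulus a B (|t - s|)) ∧
    ((∀ ε : ℝ, 0 < ε → ∀ t₀ ∈ Icc (0 : ℝ) a, ∃ δ : ℝ, 0 < δ ∧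
        ∀ x ∈ B, ∀ t ∈ Icc (0 : ℝ) a, |t - t₀| < δ → ‖x t - x t₀‖ ≤ ε) →
      ContinuousOn (fun t => μ ((fun x : ℝ → X => x t) '' B)) (Icc 0 a)) :=
  convexMNC_section_lipschitz_modulus_general μ hμ a B hBne hBbdd
end
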